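/- arXiv:1605.06360 — 7 statements merged into one kernel-verified Lean document; each statement's English description precedes it below -/
import Mathlib

section
/- If G is a finite simple graph with m edges such that m ≤ C(k,2) for some integer k ≥ 1, then λ₁(G) ≤ k − 1. -/
/-!
Let `x` be an eigenvector of the adjacency matrix `A` for `μ`, and `u` a vertex where `|x|` is
maximal. Comparing the `u`-coordinates of `A x = μ x` and `A² x = μ² x` with `|x u|` gives
`|μ| ≤ deg u` and `μ² ≤ ∑_{v ~ u} deg v`. The vertex `u` and its neighbours are distinct, so
`μ² + μ ≤ ∑_v deg v = 2m ≤ k (k - 1)`, which forces `μ ≤ k - 1`.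
-/

open SimpleGraph Finset Matrix

/-- The largest eigenvalue of the adjacency matrix of a finite graph. -/
noncomputable def lam1 {V : Type*} [Fintype V] [DecidableEq V] (G : SimpleGraph V)
    [DecidableRel G.Adj] : ℝ :=
  sSup {μ : ℝ | Module.End.HasEigenvalue (Matrix.toLin' (G.adjMatrix ℝ)) μ}

/-- The hypercube graph `Q_d`, with vertices the subsets of `[d]`. -/
def cube (d : ℕ) : SimpleGraph (Finset (Fin d)) where
  Adj S T := (symmDiff S T).card = 1
  symm := ⟨fun S T h => by simpa [symmDiff_comm] using h⟩
  loopless := ⟨fun S h => by simp [symmDiff_self] at h⟩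

instance cubeAdjDec (d : ℕ) : DecidableRel (cube d).Adj :=
  fun S T => inferInstanceAs (Decidable ((symmDiff S T).card = 1))

instance cubeInduceAdjDec (d : ℕ) (s : Set (Finset (Fin d))) :
    DecidableRel ((cube d).induce s).Adj :=
  fun a b => cubeAdjDec d a b

theorem exists_abs_le_abs_of_ne_zero {n : Type*} [Finite n] {x : n → ℝ} (hx : x ≠ 0) :
    ∃ u, x u ≠ 0 ∧ ∀ v, |x v| ≤ |x u| := by
  obtain ⟨w, hw⟩ := Function.ne_iff.mp hx
  have : Nonempty n := ⟨w⟩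
  obtain ⟨u, hu⟩ := Finite.exists_max fun v => |x v|
  refine ⟨u, fun hu0 => hw ?_, hu⟩
  simpa [hu0] using hu w

theorem Matrix.abs_le_sum_row_of_mulVec_eq_smul {n : Type*} [Fintype n]
    {B : Matrix n n ℝ} {x : n → ℝ} {c : ℝ} {u : n} (hB : ∀ w, 0 ≤ B u w)
    (hx : B *ᵥ x = c • x) (hu : x u ≠ 0) (hmax : ∀ v, |x v| ≤ |x u|) :
    |c| ≤ ∑ w, B u w := by
  refine le_of_mul_le_mul_right ?_ (abs_pos.mpr hu)
  calc |c| * |x u| = |∑ w, B u w * x w| := by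
        rw [← abs_mul, ← smul_eq_mul, ← Pi.smul_apply, ← hx, mulVec, dotProduct]
    _ ≤ ∑ w, B u w * |x w| := by
        grw [abs_sum_le_sum_abs]
        simp_rw [abs_mul, abs_of_nonneg (hB _), le_refl]
    _ ≤ ∑ w, B u w * |x u| := sum_le_sum fun w _ => mul_le_mul_of_nonneg_left (hmax w) (hB w)
    _ = (∑ w, B u w) * |x u| := by rw [sum_mul]

namespace SimpleGraph

variable {V : Type*} (G : SimpleGraph V) [DecidableRel G.Adj]

theorem adjMatrix_apply_nonneg (v w : V) : 0 ≤ G.adjMatrix ℝ v w := by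
  rw [adjMatrix_apply]
  split_ifs <;> norm_num

variable [Fintype V]

theorem sum_adjMatrix_apply_row (u : V) : ∑ w, G.adjMatrix ℝ u w = G.degree u := by
  simpa [dotProduct] using G.adjMatrix_dotProduct u (fun _ => (1 : ℝ))

theorem sum_adjMatrix_mul_self_apply_row (u : V) :
    ∑ w, (G.adjMatrix ℝ * G.adjMatrix ℝ) u w = ∑ v ∈ G.neighborFinset u, (G.degree v : ℝ) := by
  simp only [adjMatrix_mul_apply]
  rw [Finset.sum_comm]
  simp only [sum_adjMatrix_apply_row]

theorem sum_degree_neighborFinset_add_degree_le [DecidableEq V] (u : V) :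
    ∑ v ∈ G.neighborFinset u, G.degree v + G.degree u ≤ 2 * #G.edgeFinset :=
  calc ∑ v ∈ G.neighborFinset u, G.degree v + G.degree u
      = ∑ v ∈ insert u (G.neighborFinset u), G.degree v := by
        rw [sum_insert (by simp), add_comm]
    _ ≤ ∑ v, G.degree v := sum_le_sum_of_subset (subset_univ _)
    _ = 2 * #G.edgeFinset := G.sum_degrees_eq_twice_card_edges

theorem sq_add_le_two_mul_card_edgeFinset_of_hasEigenvalue [DecidableEq V] {μ : ℝ}
    (hμ : Module.End.HasEigenvalue (toLin' (G.adjMatrix ℝ)) μ) :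
    μ ^ 2 + μ ≤ 2 * #G.edgeFinset := by
  obtain ⟨x, hx⟩ := hμ.exists_hasEigenvector
  have hAx : G.adjMatrix ℝ *ᵥ x = μ • x := by simpa using hx.apply_eq_smul
  have hAAx : (G.adjMatrix ℝ * G.adjMatrix ℝ) *ᵥ x = (μ ^ 2) • x := by
    rw [← mulVec_mulVec, hAx, mulVec_smul, hAx, smul_smul, sq]
  obtain ⟨u, hu, hmax⟩ := exists_abs_le_abs_of_ne_zero hx.2
  have hdeg : |μ| ≤ G.degree u := by
    rw [← sum_adjMatrix_apply_row]
    exact abs_le_sum_row_of_mulVec_eq_smul (G.adjMatrix_apply_nonneg u) hAx hu hmax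
  have hdeg2 : |μ ^ 2| ≤ ∑ v ∈ G.neighborFinset u, (G.degree v : ℝ) := by
    rw [← sum_adjMatrix_mul_self_apply_row]
    refine abs_le_sum_row_of_mulVec_eq_smul (fun w => sum_nonneg fun v _ => ?_) hAAx hu hmax
    exact mul_nonneg (G.adjMatrix_apply_nonneg u v) (G.adjMatrix_apply_nonneg v w)
  have hedges : ∑ v ∈ G.neighborFinset u, (G.degree v : ℝ) + G.degree u ≤ 2 * #G.edgeFinset := by
    exact_mod_cast G.sum_degree_neighborFinset_add_degree_le u
  linarith [le_abs_self μ, le_abs_self (μ ^ 2)]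

end SimpleGraph

theorem brualdi_hoffman {V : Type*} [Fintype V] [DecidableEq V]
    (G : SimpleGraph V) [DecidableRel G.Adj] (k : ℕ) (hk : 1 ≤ k)
    (hm : G.edgeFinset.card ≤ k.choose 2) :
    lam1 G ≤ (k : ℝ) - 1 := by
  have hk' : (1 : ℝ) ≤ k := by exact_mod_cast hk
  have hedges : 2 * (#G.edgeFinset : ℝ) ≤ k * (k - 1) := by
    have := (Nat.cast_le (α := ℝ)).mpr hm
    rw [Nat.cast_choose_two] at this
    linarith
  -- `0 ≤ k - 1` is needed because `sSup ∅ = 0` in `ℝ`.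
  refine Real.sSup_le (fun μ hμ => ?_) (by linarith)
  have := G.sq_add_le_two_mul_card_edgeFinset_of_hasEigenvalue hμ
  nlinarith
end

section
/- If G is a triangle-free graph with m edges, then λ₁(G) ≤ √m. -/
open SimpleGraph Finset Matrix

/-!
If `μ` is an eigenvalue of the adjacency matrix `A`, then `μ²` is an eigenvalue of `A²`, so by
Gershgorin's theorem `μ²` is at most some row sum of `A²`, namely `∑_{u ~ v} deg u` for a vertex
`v`. In a triangle-free graph the neighbours of `v` are pairwise non-adjacent, so the edges at
different neighbours are distinct and this sum is at most the number of edges.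
-/

theorem Matrix.exists_norm_le_sum_norm_row_of_hasEigenvalue {K n : Type*} [NormedField K]
    [Fintype n] [DecidableEq n] {A : Matrix n n K} {μ : K}
    (hμ : Module.End.HasEigenvalue (Matrix.toLin' A) μ) :
    ∃ k, ‖μ‖ ≤ ∑ j, ‖A k j‖ := by
  obtain ⟨k, hk⟩ := eigenvalue_mem_ball hμ
  refine ⟨k, ?_⟩
  rw [Metric.mem_closedBall, dist_eq_norm] at hk
  calc ‖μ‖ ≤ ‖A k k‖ + ‖μ - A k k‖ := norm_le_norm_add_norm_sub' μ (A k k)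
    _ ≤ ‖A k k‖ + ∑ j ∈ univ.erase k, ‖A k j‖ := by gcongr
    _ = ∑ j, ‖A k j‖ := add_sum_erase _ (fun j => ‖A k j‖) (mem_univ k)

namespace SimpleGraph

variable {V : Type*} [Fintype V] [DecidableEq V] (G : SimpleGraph V) [DecidableRel G.Adj]

theorem sum_adjMatrix_sq_apply {α : Type*} [Semiring α] (v : V) :
    ∑ w, (G.adjMatrix α ^ 2) v w = ∑ u ∈ G.neighborFinset v, (G.degree u : α) := by
  simp_rw [sq, adjMatrix_mul_apply]
  rw [sum_comm]
  refine sum_congr rfl fun u _ => ?_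
  simp [adjMatrix_apply, sum_boole, ← card_neighborFinset_eq_degree, neighborFinset_eq_filter]

variable {G}

theorem sum_degree_neighborFinset_le_card_edgeFinset (hG : G.CliqueFree 3) (v : V) :
    ∑ u ∈ G.neighborFinset v, G.degree u ≤ #G.edgeFinset := by
  have hdisj : (G.neighborFinset v : Set V).PairwiseDisjoint fun u => G.incidenceFinset u := by
    intro a ha b hb hab
    have hnadj : ¬G.Adj a b := isIndepSet_neighborSet_of_triangleFree G hG v (by simpa using ha)
      (by simpa using hb) hab
    rw [Function.onFun, ← disjoint_coe, coe_incidenceFinset, coe_incidenceFinset,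
      Set.disjoint_iff_inter_eq_empty]
    exact G.incidenceSet_inter_incidenceSet_of_not_adj hnadj hab
  calc ∑ u ∈ G.neighborFinset v, G.degree u
      = #((G.neighborFinset v).biUnion fun u => G.incidenceFinset u) := by
        rw [card_biUnion hdisj]
        simp_rw [card_incidenceFinset_eq_degree]
    _ ≤ #G.edgeFinset := card_le_card (biUnion_subset.2 fun u _ => G.incidenceFinset_subset u)

theorem sq_le_card_edgeFinset_of_hasEigenvalue (hG : G.CliqueFree 3) {μ : ℝ}
    (hμ : Module.End.HasEigenvalue (Matrix.toLin' (G.adjMatrix ℝ)) μ) :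
    μ ^ 2 ≤ #G.edgeFinset := by
  have hμ2 : Module.End.HasEigenvalue (Matrix.toLin' (G.adjMatrix ℝ ^ 2)) (μ ^ 2) := by
    rw [Matrix.toLin'_pow]
    exact hμ.pow 2
  obtain ⟨k, hk⟩ := Matrix.exists_norm_le_sum_norm_row_of_hasEigenvalue hμ2
  have hnonneg : ∀ j, 0 ≤ (G.adjMatrix ℝ ^ 2) k j := fun j => by
    rw [adjMatrix_pow_apply_eq_card_walk]
    positivity
  calc μ ^ 2 = ‖μ ^ 2‖ := (Real.norm_of_nonneg (sq_nonneg μ)).symm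
    _ ≤ ∑ j, (G.adjMatrix ℝ ^ 2) k j := by
        simpa only [Real.norm_of_nonneg (hnonneg _)] using hk
    _ = ∑ u ∈ G.neighborFinset k, (G.degree u : ℝ) := G.sum_adjMatrix_sq_apply k
    _ ≤ #G.edgeFinset := by exact_mod_cast sum_degree_neighborFinset_le_card_edgeFinset hG k

end SimpleGraph

theorem nosal_bound {V : Type*} [Fintype V] [DecidableEq V]
    (G : SimpleGraph V) [DecidableRel G.Adj] (htf : G.CliqueFree 3) :
    lam1 G ≤ Real.sqrt (G.edgeFinset.card : ℝ) :=
  Real.sSup_le (fun _ hμ => Real.le_sqrt_of_sq_le (sq_le_card_edgeFinset_of_hasEigenvalue htf hμ))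
    (Real.sqrt_nonneg _)
end

section
/- Let i ∈ [d] and let v ∈ ℝ^{V(Q_d)}. Define the compression C_{i,∅}(v) which, for each pair (S, S∪{i}) with i ∉ S, replaces (v_S, v_{S∪{i}}) by (max(v_S, v_{S∪{i}}), min(v_S, v_{S∪{i}})). Then ⟨A(Q_d) v, v⟩ ≤ ⟨A(Q_d) C_{i,∅}(v), C_{i,∅}(v)⟩. -/
open SimpleGraph Finset Matrix

/-- The compression `C_{i,∅}`: for each pair `(S, S ∪ {i})` with `i ∉ S`,
the pair of values is rearranged so that the larger sits on `S`. -/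
noncomputable def compDown (d : ℕ) (i : Fin d) (v : Finset (Fin d) → ℝ) :
    Finset (Fin d) → ℝ := fun S =>
  if i ∈ S then min (v (S.erase i)) (v S) else max (v S) (v (insert i S))

/-!
Toggling `i` is an involutive automorphism `σ` of `Q_d`, so `⟨A v, v⟩ = ∑_{S ~ T} v_S v_T` is half
the sum over edges `ST` of `v_S v_T + v_{σS} v_{σT}`, and `C_{i,∅}` sorts each pair `(v_S, v_{σS})`.
For an edge with both ends on the same side of direction `i`, the two pairs are sorted the same
way, and the two-point rearrangement inequality `ab + a'b' ≤ min a a' min b b' + max a a' max b b'`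
applies. An edge in direction `i` joins some `S` to `σS`, and its term is unchanged because
`min · max` is the product. The argument works for any graph with an involutive automorphism
`σ` and a side predicate swapped by `σ` such that the only edges between the sides join `x` to `σx`.
-/

lemma mul_add_mul_le_min_mul_min_add_max_mul_max {R : Type*} [CommRing R] [LinearOrder R]
    [IsStrictOrderedRing R] (a a' b b' : R) :
    a * b + a' * b' ≤ min a a' * min b b' + max a a' * max b b' := by
  rcases le_total a a' with ha | ha <;> rcases le_total b b' with hb | hb <;>
    simp only [min_eq_left, min_eq_right, max_eq_left, max_eq_right, ha, hb]
  · exact le_rfl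
  · exact mul_add_mul_le_mul_add_mul ha hb
  · linarith [mul_add_mul_le_mul_add_mul ha hb]
  · linarith

section Polarize

variable {V R : Type*} [LinearOrder R] (σ : V → V) (p : V → Prop) [DecidablePred p]

def polarize (v : V → R) : V → R :=
  fun x => if p x then min (v x) (v (σ x)) else max (v x) (v (σ x))

variable {σ p}

lemma polarize_apply_apply (hσ : Function.Involutive σ) (hp : ∀ x, p (σ x) ↔ ¬ p x)
    (v : V → R) (x : V) :
    polarize σ p v (σ x) = if p x then max (v x) (v (σ x)) else min (v x) (v (σ x)) := by
  by_cases h : p x <;> simp [polarize, h, hp, hσ x, min_comm, max_comm]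

lemma mul_add_mul_le_polarize [CommRing R] [IsStrictOrderedRing R]
    (hσ : Function.Involutive σ) (hp : ∀ x, p (σ x) ↔ ¬ p x) (v : V → R) {x y : V}
    (hxy : (p x ↔ p y) ∨ y = σ x) :
    v x * v y + v (σ x) * v (σ y) ≤
      polarize σ p v x * polarize σ p v y + polarize σ p v (σ x) * polarize σ p v (σ y) := by
  rcases hxy with hsame | rfl
  · rw [polarize_apply_apply hσ hp, polarize_apply_apply hσ hp]
    by_cases h : p x
    · simp only [polarize, h, hsame.mp h, if_true]
      exact mul_add_mul_le_min_mul_min_add_max_mul_max ..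
    · simp only [polarize, h, hsame.not.mp h, if_false]
      linarith [mul_add_mul_le_min_mul_min_add_max_mul_max (v x) (v (σ x)) (v y) (v (σ y))]
  · rw [hσ x, polarize_apply_apply hσ hp]
    by_cases h : p x <;> simp only [polarize, h, if_true, if_false, min_mul_max, max_mul_min]
      <;> rw [mul_comm (v (σ x))]

end Polarize

namespace SimpleGraph

variable {V : Type*} [Fintype V] {G : SimpleGraph V} [DecidableRel G.Adj]

lemma dotProduct_adjMatrix_mulVec (u : V → ℝ) :
    u ⬝ᵥ (G.adjMatrix ℝ *ᵥ u) = ∑ x, ∑ y, if G.Adj x y then u x * u y else 0 := by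
  simp only [dotProduct, adjMatrix_mulVec_apply, Finset.mul_sum, neighborFinset_eq_filter,
    Finset.sum_filter, mul_ite, mul_zero]

lemma two_mul_dotProduct_adjMatrix_mulVec (σ : G ≃g G) (u : V → ℝ) :
    2 * (u ⬝ᵥ (G.adjMatrix ℝ *ᵥ u)) =
      ∑ x, ∑ y, if G.Adj x y then u x * u y + u (σ x) * u (σ y) else 0 := by
  have h_invariant : u ⬝ᵥ (G.adjMatrix ℝ *ᵥ u) =
      ∑ x, ∑ y, if G.Adj x y then u (σ x) * u (σ y) else 0 := by
    rw [dotProduct_adjMatrix_mulVec]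
    exact (Fintype.sum_equiv σ.toEquiv _ _ fun x => Fintype.sum_equiv σ.toEquiv _ _ fun y => by
      simp only [RelIso.coe_fn_toEquiv, σ.map_adj_iff]).symm
  rw [two_mul]
  nth_rw 1 [dotProduct_adjMatrix_mulVec]
  simp only [h_invariant, ← Finset.sum_add_distrib, ite_add_ite, add_zero]

theorem dotProduct_adjMatrix_mulVec_le_polarize (σ : G ≃g G) (hσ : Function.Involutive σ)
    {p : V → Prop} [DecidablePred p] (hp : ∀ x, p (σ x) ↔ ¬ p x)
    (hcross : ∀ x y, G.Adj x y → p x → ¬ p y → y = σ x) (v : V → ℝ) :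
    v ⬝ᵥ (G.adjMatrix ℝ *ᵥ v) ≤ polarize σ p v ⬝ᵥ (G.adjMatrix ℝ *ᵥ polarize σ p v) := by
  suffices 2 * (v ⬝ᵥ (G.adjMatrix ℝ *ᵥ v)) ≤
      2 * (polarize σ p v ⬝ᵥ (G.adjMatrix ℝ *ᵥ polarize σ p v)) by linarith
  rw [two_mul_dotProduct_adjMatrix_mulVec σ, two_mul_dotProduct_adjMatrix_mulVec σ]
  gcongr with x _ y _
  split_ifs with hxy
  · refine mul_add_mul_le_polarize hσ hp v ?_
    by_cases hx : p x <;> by_cases hy : p y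
    · exact .inl (iff_of_true hx hy)
    · exact .inr (hcross x y hxy hx hy)
    · exact .inr (by rw [hcross y x hxy.symm hy hx, hσ])
    · exact .inl (iff_of_false hx hy)
  · exact le_rfl

end SimpleGraph

lemma Finset.symmDiff_singleton_of_mem {α : Type*} [DecidableEq α] {s : Finset α} {a : α}
    (h : a ∈ s) : symmDiff s {a} = s.erase a := by
  ext x; by_cases hx : x = a <;> simp [Finset.mem_symmDiff, hx, h]

lemma Finset.symmDiff_singleton_of_notMem {α : Type*} [DecidableEq α] {s : Finset α} {a : α}
    (h : a ∉ s) : symmDiff s {a} = insert a s := by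
  ext x; by_cases hx : x = a <;> simp [Finset.mem_symmDiff, hx, h]

def cubeFlip (d : ℕ) (i : Fin d) : cube d ≃g cube d where
  toEquiv := (symmDiff_left_involutive {i}).toPerm
  map_rel_iff' {S T} := by
    change (symmDiff (symmDiff S {i}) (symmDiff T {i})).card = 1 ↔ (symmDiff S T).card = 1
    rw [symmDiff_symmDiff_symmDiff_comm, symmDiff_self, symmDiff_bot]

lemma cubeFlip_apply (d : ℕ) (i : Fin d) (S : Finset (Fin d)) :
    cubeFlip d i S = symmDiff S {i} := rfl

lemma cubeFlip_involutive (d : ℕ) (i : Fin d) : Function.Involutive (cubeFlip d i) :=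
  symmDiff_left_involutive {i}

lemma mem_cubeFlip_self_iff (d : ℕ) (i : Fin d) (S : Finset (Fin d)) :
    i ∈ cubeFlip d i S ↔ i ∉ S := by
  simp [cubeFlip_apply, Finset.mem_symmDiff]

lemma cube_adj_eq_cubeFlip {d : ℕ} {i : Fin d} {S T : Finset (Fin d)} (h : (cube d).Adj S T)
    (hS : i ∈ S) (hT : i ∉ T) : T = cubeFlip d i S := by
  obtain ⟨j, hj⟩ := Finset.card_eq_one.mp (show (symmDiff S T).card = 1 from h)
  have hij : i = j := Finset.mem_singleton.mp (hj ▸ Finset.mem_symmDiff.mpr (.inl ⟨hS, hT⟩))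
  rw [cubeFlip_apply, hij, ← hj, symmDiff_symmDiff_cancel_left]

lemma compDown_eq_polarize (d : ℕ) (i : Fin d) (v : Finset (Fin d) → ℝ) :
    compDown d i v = polarize (cubeFlip d i) (i ∈ ·) v := by
  ext S
  by_cases h : i ∈ S
  · simp [compDown, polarize, cubeFlip_apply, h, Finset.symmDiff_singleton_of_mem, min_comm]
  · simp [compDown, polarize, cubeFlip_apply, h, Finset.symmDiff_singleton_of_notMem]

theorem down_compression_quadForm (d : ℕ) (i : Fin d) (v : Finset (Fin d) → ℝ) :
    v ⬝ᵥ ((cube d).adjMatrix ℝ *ᵥ v) ≤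
      compDown d i v ⬝ᵥ ((cube d).adjMatrix ℝ *ᵥ compDown d i v) := by
  rw [compDown_eq_polarize]
  exact dotProduct_adjMatrix_mulVec_le_polarize (cubeFlip d i) (cubeFlip_involutive d i)
    (mem_cubeFlip_self_iff d i)
    (fun _ _ h hS hT => cube_adj_eq_cubeFlip h hS hT) v
end

section
/- Let U be a subset of V(Q_d) of size n and d' ≤ d. Then the number of d'-dimensional subcubes contained in Q_d[U] is at most (n/2^{d'})·C(⌈log₂ n⌉ + 1, d'). -/
open SimpleGraph Finset Matrix

/-- The number of `d'`-dimensional subcubes of `Q_d` all of whose vertices lie in `U`;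
a subcube is encoded by its bottom vertex `p.1` and its set of free directions `p.2`. -/
def numCubes (d d' : ℕ) (U : Finset (Finset (Fin d))) : ℕ :=
  (Finset.univ.filter (fun p : Finset (Fin d) × Finset (Fin d) =>
    Disjoint p.1 p.2 ∧ p.2.card = d' ∧ ∀ T ∈ p.2.powerset, p.1 ∪ T ∈ U)).card

/-
Identify a number with the vertex given by its set of binary digits. Splitting `U` along a
coordinate `a` into its two facets `U₀` and `U₁` (the latter moved onto the former), the
`k`-cubes of `U` are those of `U₀`, those of `U₁`, and those with free direction `a`, which
correspond to `(k - 1)`-cubes of `U₀ ∩ U₁`. Initial segments `{0, …, n - 1}` are extremal: writing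
`G k n` for their number of `k`-cubes, splitting along the lowest binary digit proves
`G k a + G k b + G (k - 1) b ≤ G k (a + b)` for `b ≤ a`, so induction over the coordinates gives
`numCubes d k U ≤ G k |U|`. Splitting `G k n` along the lowest digit once more gives
`2 ^ k * G k n ≤ n * C(t + 1, k)` whenever `n ≤ 2 ^ t`.
-/

def bitCount (n : ℕ) : ℕ := (Nat.digits 2 n).sum

lemma bitCount_eq (n : ℕ) : bitCount n = n % 2 + bitCount (n / 2) := by
  rcases Nat.eq_zero_or_pos n with rfl | hn
  · rfl
  · simp [bitCount, Nat.digits_def' one_lt_two hn]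

lemma bitCount_two_mul (m : ℕ) : bitCount (2 * m) = bitCount m := by
  rw [bitCount_eq]; simp

lemma bitCount_two_mul_add_one (m : ℕ) : bitCount (2 * m + 1) = bitCount m + 1 := by
  have h : (2 * m + 1) / 2 = m := by omega
  rw [bitCount_eq, h]; omega

def sumBitCount (f : ℕ → ℕ) (n : ℕ) : ℕ := ∑ j ∈ range n, f (bitCount j)

lemma sumBitCount_succ (f : ℕ → ℕ) (n : ℕ) :
    sumBitCount f (n + 1) = sumBitCount f n + f (bitCount n) :=
  sum_range_succ _ _

lemma sumBitCount_mono (f : ℕ → ℕ) : Monotone (sumBitCount f) := fun _ _ h =>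
  sum_le_sum_of_subset (range_subset_range.mpr h)

lemma sumBitCount_eq_halves (f : ℕ → ℕ) (n : ℕ) :
    sumBitCount f n =
      sumBitCount f ((n + 1) / 2) + sumBitCount (fun i => f (i + 1)) (n / 2) := by
  induction n with
  | zero => rfl
  | succ n ih =>
    obtain ⟨m, rfl | rfl⟩ := Nat.even_or_odd' n
    · have h₁ : (2 * m + 1 + 1) / 2 = m + 1 := by omega
      have h₂ : (2 * m + 1) / 2 = m := by omega
      have h₃ : 2 * m / 2 = m := by omega
      rw [h₁, h₂, sumBitCount_succ, sumBitCount_succ, ih, h₂, h₃, bitCount_two_mul]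
      omega
    · have h₁ : (2 * m + 1 + 1 + 1) / 2 = m + 1 := by omega
      have h₂ : (2 * m + 1 + 1) / 2 = m + 1 := by omega
      have h₃ : (2 * m + 1) / 2 = m := by omega
      rw [h₁, h₂, sumBitCount_succ, ih, h₂, h₃, sumBitCount_succ (fun i => f (i + 1)),
        bitCount_two_mul_add_one]
      omega

theorem sumBitCount_add_le {f : ℕ → ℕ} (hf : Monotone f) {a b : ℕ} (hba : b ≤ a) :
    sumBitCount f a + sumBitCount (fun i => f (i + 1)) b ≤ sumBitCount f (a + b) := by
  induction h : a + b using Nat.strong_induction_on generalizing f a b with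
  | _ N ih =>
    subst h
    rcases Nat.eq_zero_or_pos b with rfl | hb
    · simp [sumBitCount]
    rcases hba.eq_or_lt with rfl | hba
    · have h₁ : (b + b + 1) / 2 = b := by omega
      have h₂ : (b + b) / 2 = b := by omega
      rw [sumBitCount_eq_halves f (b + b), h₁, h₂]
    have hf' : Monotone (fun i => f (i + 1)) := fun _ _ h => hf (Nat.add_le_add_right h 1)
    rw [sumBitCount_eq_halves f a, sumBitCount_eq_halves (fun i => f (i + 1)) b,
      sumBitCount_eq_halves f (a + b)]
    by_cases hodd : a % 2 = 1 ∧ b % 2 = 1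
    · -- the halves of `b` pair up with those of `a` the other way round; monotonicity of `f`
      -- pays for the exchange
      have i₁ := ih _ (by omega) hf (a := (a + 1) / 2) (b := b / 2) (by omega) rfl
      have i₂ := ih _ (by omega) hf' (a := a / 2) (b := b / 2 + 1) (by omega) rfl
      have hexch : f (bitCount (b / 2) + 1) ≤ f (bitCount (b / 2) + 1 + 1) := hf (by omega)
      have h₁ : (b + 1) / 2 = b / 2 + 1 := by omega
      have e₁ : (a + 1) / 2 + b / 2 = (a + b + 1) / 2 := by omega
      have e₂ : a / 2 + (b / 2 + 1) = (a + b) / 2 := by omega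
      rw [e₁] at i₁
      rw [e₂, sumBitCount_succ] at i₂
      rw [h₁, sumBitCount_succ]
      omega
    · have i₁ := ih _ (by omega) hf (a := (a + 1) / 2) (b := (b + 1) / 2) (by omega) rfl
      have i₂ := ih _ (by omega) hf' (a := a / 2) (b := b / 2) (by omega) rfl
      have e₁ : (a + 1) / 2 + (b + 1) / 2 = (a + b + 1) / 2 := by omega
      have e₂ : a / 2 + b / 2 = (a + b) / 2 := by omega
      rw [e₁] at i₁
      rw [e₂] at i₂
      omega

/-- `initialCubes k n` counts the `k`-cubes of the initial segment `{0, …, n - 1}`: the segment is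
closed under removing binary digits, so `j` is the top vertex of `(bitCount j).choose k` of
them. -/
def initialCubes (k n : ℕ) : ℕ := sumBitCount (·.choose k) n

lemma initialCubes_zero_left (n : ℕ) : initialCubes 0 n = n := by
  simp [initialCubes, sumBitCount]

lemma initialCubes_mono (k : ℕ) : Monotone (initialCubes k) := sumBitCount_mono _

lemma sumBitCount_choose_succ (k n : ℕ) :
    sumBitCount (fun i => (i + 1).choose (k + 1)) n =
      initialCubes (k + 1) n + initialCubes k n := by
  simp only [initialCubes, sumBitCount, Nat.choose_succ_succ', ← sum_add_distrib, add_comm]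

lemma initialCubes_eq_halves (k n : ℕ) :
    initialCubes (k + 1) n =
      initialCubes (k + 1) ((n + 1) / 2) + initialCubes (k + 1) (n / 2) +
        initialCubes k (n / 2) := by
  rw [add_assoc, ← sumBitCount_choose_succ]
  exact sumBitCount_eq_halves _ n

lemma initialCubes_add_le_of_le {k a b : ℕ} (hba : b ≤ a) :
    initialCubes (k + 1) a + initialCubes (k + 1) b + initialCubes k b ≤
      initialCubes (k + 1) (a + b) := by
  rw [add_assoc, ← sumBitCount_choose_succ]
  exact sumBitCount_add_le (fun _ _ h => Nat.choose_le_choose _ h) hba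

lemma initialCubes_add_add_le {k a b w : ℕ} (hwa : w ≤ a) (hwb : w ≤ b) :
    initialCubes (k + 1) a + initialCubes (k + 1) b + initialCubes k w ≤
      initialCubes (k + 1) (a + b) := by
  rcases le_total b a with hba | hab
  · calc _ ≤ initialCubes (k + 1) a + initialCubes (k + 1) b + initialCubes k b := by
          gcongr; exact initialCubes_mono k hwb
      _ ≤ _ := initialCubes_add_le_of_le hba
  · calc _ ≤ initialCubes (k + 1) b + initialCubes (k + 1) a + initialCubes k a := by
          rw [add_comm (initialCubes (k + 1) a)]; gcongr; exact initialCubes_mono k hwa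
      _ ≤ _ := add_comm a b ▸ initialCubes_add_le_of_le hab

theorem two_pow_mul_initialCubes_le {t k n : ℕ} (hn : n ≤ 2 ^ t) :
    2 ^ k * initialCubes k n ≤ n * (t + 1).choose k := by
  induction t generalizing k n with
  | zero =>
    interval_cases n <;> cases k <;> simp [initialCubes, sumBitCount, bitCount]
  | succ t ih =>
    cases k with
    | zero => simp [initialCubes_zero_left]
    | succ k =>
      have h₁ := ih (k := k + 1) (n := (n + 1) / 2) (by rw [pow_succ] at hn; omega)
      have h₂ := ih (k := k + 1) (n := n / 2) (by rw [pow_succ] at hn; omega)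
      have h₃ := ih (k := k) (n := n / 2) (by rw [pow_succ] at hn; omega)
      have hhalf : (n + 1) / 2 + n / 2 = n := by omega
      have hdouble : 2 * (n / 2) ≤ n := by omega
      calc 2 ^ (k + 1) * initialCubes (k + 1) n
          = 2 ^ (k + 1) * initialCubes (k + 1) ((n + 1) / 2)
            + 2 ^ (k + 1) * initialCubes (k + 1) (n / 2)
            + 2 * (2 ^ k * initialCubes k (n / 2)) := by
            rw [initialCubes_eq_halves]; ring
        _ ≤ (n + 1) / 2 * (t + 1).choose (k + 1) + n / 2 * (t + 1).choose (k + 1)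
            + 2 * (n / 2) * (t + 1).choose k := by
            rw [mul_assoc 2]; gcongr
        _ ≤ n * (t + 1).choose (k + 1) + n * (t + 1).choose k := by
            rw [← add_mul, hhalf]; gcongr
        _ = n * (t + 1 + 1).choose (k + 1) := by
            rw [Nat.choose_succ_succ' (t + 1) k]; ring

section Subcubes

variable {d : ℕ}

def cubesIn (k : ℕ) (U : Finset (Finset (Fin d))) : Finset (Finset (Fin d) × Finset (Fin d)) :=
  univ.filter fun p => Disjoint p.1 p.2 ∧ p.2.card = k ∧ ∀ T ∈ p.2.powerset, p.1 ∪ T ∈ U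

lemma numCubes_eq_card_cubesIn (k : ℕ) (U : Finset (Finset (Fin d))) :
    numCubes d k U = #(cubesIn k U) := rfl

lemma mem_cubesIn {k : ℕ} {U : Finset (Finset (Fin d))} {p : Finset (Fin d) × Finset (Fin d)} :
    p ∈ cubesIn k U ↔ Disjoint p.1 p.2 ∧ #p.2 = k ∧ ∀ T ⊆ p.2, p.1 ∪ T ∈ U := by
  simp [cubesIn]

def lowerFacet (a : Fin d) (U : Finset (Finset (Fin d))) : Finset (Finset (Fin d)) :=
  U.filter (a ∉ ·)

def upperFacet (a : Fin d) (U : Finset (Finset (Fin d))) : Finset (Finset (Fin d)) :=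
  (U.filter (a ∈ ·)).image (·.erase a)

variable {a : Fin d} {U : Finset (Finset (Fin d))}

lemma mem_lowerFacet {S : Finset (Fin d)} : S ∈ lowerFacet a U ↔ S ∈ U ∧ a ∉ S :=
  mem_filter

lemma mem_upperFacet {S : Finset (Fin d)} :
    S ∈ upperFacet a U ↔ a ∉ S ∧ insert a S ∈ U := by
  simp only [upperFacet, mem_image, mem_filter]
  constructor
  · rintro ⟨S, ⟨hS, haS⟩, rfl⟩
    exact ⟨notMem_erase a S, by rwa [insert_erase haS]⟩
  · rintro ⟨haS, hS⟩
    exact ⟨insert a S, ⟨hS, mem_insert_self a S⟩, erase_insert haS⟩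

lemma card_lowerFacet_add_card_upperFacet : #(lowerFacet a U) + #(upperFacet a U) = #U := by
  have hinj : Set.InjOn (·.erase a) (U.filter (a ∈ ·) : Set (Finset (Fin d))) := by
    intro S hS T hT hST
    rw [coe_filter] at hS hT
    rw [← insert_erase hS.2, ← insert_erase hT.2]
    exact congrArg (insert a) hST
  rw [upperFacet, card_image_of_injOn hinj, add_comm]
  exact card_filter_add_card_filter_not _

lemma subset_of_mem_lowerFacet {A : Finset (Fin d)} (hU : ∀ S ∈ U, S ⊆ insert a A)
    {S : Finset (Fin d)} (hS : S ∈ lowerFacet a U) : S ⊆ A := by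
  rw [mem_lowerFacet] at hS
  exact (subset_insert_iff_of_notMem hS.2).mp (hU S hS.1)

lemma subset_of_mem_upperFacet {A : Finset (Fin d)} (hU : ∀ S ∈ U, S ⊆ insert a A)
    {S : Finset (Fin d)} (hS : S ∈ upperFacet a U) : S ⊆ A := by
  rw [mem_upperFacet] at hS
  exact (subset_insert_iff_of_notMem hS.1).mp ((subset_insert a S).trans (hU _ hS.2))

lemma card_cubesIn_filter_notMem_le (k : ℕ) :
    #{p ∈ cubesIn k U | a ∉ p.2 ∧ a ∉ p.1} ≤ #(cubesIn k (lowerFacet a U)) := by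
  refine card_le_card fun p hp => ?_
  obtain ⟨hp, ha₂, ha₁⟩ := mem_filter.mp hp
  obtain ⟨hdisj, hcard, hsub⟩ := mem_cubesIn.mp hp
  refine mem_cubesIn.mpr ⟨hdisj, hcard, fun T hT => mem_lowerFacet.mpr ⟨hsub T hT, ?_⟩⟩
  simp only [mem_union, not_or]
  exact ⟨ha₁, fun h => ha₂ (hT h)⟩

lemma card_cubesIn_filter_mem_fst_le (k : ℕ) :
    #{p ∈ cubesIn k U | a ∉ p.2 ∧ a ∈ p.1} ≤ #(cubesIn k (upperFacet a U)) := by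
  refine card_le_card_of_injOn (fun p => (p.1.erase a, p.2)) (fun p hp => ?_) ?_
  · obtain ⟨hp, ha₂, ha₁⟩ := mem_filter.mp hp
    obtain ⟨hdisj, hcard, hsub⟩ := mem_cubesIn.mp hp
    refine mem_cubesIn.mpr ⟨hdisj.mono_left (erase_subset a p.1), hcard, fun T hT => ?_⟩
    have haT : a ∉ T := fun h => ha₂ (hT h)
    refine mem_upperFacet.mpr ⟨by simp [haT], ?_⟩
    rw [← insert_union, insert_erase ha₁]
    exact hsub T hT
  · intro p hp q hq hpq
    simp only [coe_filter, Set.mem_ofPred_eq, Prod.mk.injEq] at hp hq hpq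
    rw [Prod.ext_iff, ← insert_erase hp.2.2, ← insert_erase hq.2.2, hpq.1]
    exact ⟨rfl, hpq.2⟩

lemma card_cubesIn_filter_mem_snd_le (k : ℕ) :
    #{p ∈ cubesIn (k + 1) U | a ∈ p.2} ≤
      #(cubesIn k (lowerFacet a U ∩ upperFacet a U)) := by
  refine card_le_card_of_injOn (fun p => (p.1, p.2.erase a)) (fun p hp => ?_) ?_
  · obtain ⟨hp, ha₂⟩ := mem_filter.mp hp
    obtain ⟨hdisj, hcard, hsub⟩ := mem_cubesIn.mp hp
    have ha₁ : a ∉ p.1 := disjoint_right.mp hdisj ha₂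
    refine mem_cubesIn.mpr ⟨hdisj.mono_right (erase_subset a p.2), ?_, fun T hT => ?_⟩
    · rw [card_erase_of_mem ha₂, hcard, Nat.add_sub_cancel]
    have haT : a ∉ T := fun h => notMem_erase a p.2 (hT h)
    have hTp : T ⊆ p.2 := hT.trans (erase_subset a p.2)
    refine mem_inter.mpr ⟨mem_lowerFacet.mpr ⟨hsub T hTp, by simp [ha₁, haT]⟩,
      mem_upperFacet.mpr ⟨by simp [ha₁, haT], ?_⟩⟩
    rw [← union_insert]
    exact hsub _ (insert_subset ha₂ hTp)
  · intro p hp q hq hpq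
    simp only [coe_filter, Set.mem_ofPred_eq, Prod.mk.injEq] at hp hq hpq
    rw [Prod.ext_iff, ← insert_erase hp.2, ← insert_erase hq.2, hpq.2]
    exact ⟨hpq.1, rfl⟩

lemma numCubes_zero_le (U : Finset (Finset (Fin d))) : numCubes d 0 U ≤ #U := by
  rw [numCubes_eq_card_cubesIn]
  refine card_le_card_of_injOn Prod.fst (fun p hp => ?_) fun p hp q hq hpq => ?_
  · simpa using (mem_cubesIn.mp hp).2.2 ∅ (empty_subset _)
  · have hp₂ := card_eq_zero.mp (mem_cubesIn.mp hp).2.1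
    have hq₂ := card_eq_zero.mp (mem_cubesIn.mp hq).2.1
    exact Prod.ext hpq (hp₂.trans hq₂.symm)

lemma numCubes_succ_le (a : Fin d) (k : ℕ) (U : Finset (Finset (Fin d))) :
    numCubes d (k + 1) U ≤ numCubes d (k + 1) (lowerFacet a U) +
      numCubes d (k + 1) (upperFacet a U) + numCubes d k (lowerFacet a U ∩ upperFacet a U) := by
  have hsplit : #(cubesIn (k + 1) U) = #{p ∈ cubesIn (k + 1) U | a ∉ p.2 ∧ a ∉ p.1} +
      #{p ∈ cubesIn (k + 1) U | a ∉ p.2 ∧ a ∈ p.1} + #{p ∈ cubesIn (k + 1) U | a ∈ p.2} := by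
    rw [← card_filter_add_card_filter_not (s := cubesIn (k + 1) U) (fun p => a ∈ p.2),
      ← card_filter_add_card_filter_not (s := {p ∈ cubesIn (k + 1) U | a ∉ p.2})
        (fun p => a ∉ p.1), filter_filter, filter_filter]
    simp only [not_not]
    omega
  simp only [numCubes_eq_card_cubesIn, hsplit]
  have := card_cubesIn_filter_notMem_le (a := a) (U := U) (k + 1)
  have := card_cubesIn_filter_mem_fst_le (a := a) (U := U) (k + 1)
  have := card_cubesIn_filter_mem_snd_le (a := a) (U := U) k
  omega

theorem numCubes_le_initialCubes {A : Finset (Fin d)} {U : Finset (Finset (Fin d))}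
    (hU : ∀ S ∈ U, S ⊆ A) (k : ℕ) : numCubes d k U ≤ initialCubes k #U := by
  induction A using Finset.induction_on generalizing U k with
  | empty =>
    rcases k with _ | k
    · exact (numCubes_zero_le U).trans_eq (initialCubes_zero_left _).symm
    have hempty : cubesIn (k + 1) U = ∅ := eq_empty_of_forall_notMem fun p hp => by
      obtain ⟨-, hcard, hsub⟩ := mem_cubesIn.mp hp
      have hp₂ : p.2 = ∅ :=
        subset_empty.mp (subset_union_right.trans (hU _ (hsub p.2 subset_rfl)))
      simp [hp₂] at hcard
    simp [numCubes_eq_card_cubesIn, hempty]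
  | insert a A _ ih =>
    rcases k with _ | k
    · exact (numCubes_zero_le U).trans_eq (initialCubes_zero_left _).symm
    have hlower := ih (fun S hS => subset_of_mem_lowerFacet hU hS)
    have hupper := ih (fun S hS => subset_of_mem_upperFacet hU hS)
    have hinter := ih (U := lowerFacet a U ∩ upperFacet a U)
      (fun S hS => subset_of_mem_lowerFacet hU (mem_inter.mp hS).1)
    calc numCubes d (k + 1) U
        ≤ numCubes d (k + 1) (lowerFacet a U) + numCubes d (k + 1) (upperFacet a U) +
            numCubes d k (lowerFacet a U ∩ upperFacet a U) := numCubes_succ_le a k U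
      _ ≤ initialCubes (k + 1) #(lowerFacet a U) + initialCubes (k + 1) #(upperFacet a U) +
            initialCubes k #(lowerFacet a U ∩ upperFacet a U) :=
          add_le_add (add_le_add (hlower _) (hupper _)) (hinter _)
      _ ≤ initialCubes (k + 1) (#(lowerFacet a U) + #(upperFacet a U)) :=
          initialCubes_add_add_le (card_le_card inter_subset_left)
            (card_le_card inter_subset_right)
      _ = initialCubes (k + 1) #U := by rw [card_lowerFacet_add_card_upperFacet]

end Subcubes

theorem numCubes_upper_bound_general (d d' n : ℕ)
    (U : Finset (Finset (Fin d))) (hU : U.card = n) :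
    (numCubes d d' U : ℝ) ≤ (n : ℝ) / 2 ^ d' * ((Nat.clog 2 n + 1).choose d' : ℝ) := by
  have hcubes : numCubes d d' U ≤ initialCubes d' n :=
    hU ▸ numCubes_le_initialCubes (fun S _ => subset_univ S) d'
  have hsegment : 2 ^ d' * initialCubes d' n ≤ n * (Nat.clog 2 n + 1).choose d' :=
    two_pow_mul_initialCubes_le (Nat.le_pow_clog one_lt_two n)
  rw [div_mul_eq_mul_div, le_div_iff₀ (by positivity), mul_comm]
  exact_mod_cast (Nat.mul_le_mul_left _ hcubes).trans hsegment

theorem numCubes_upper_bound (d d' n : ℕ) (hd : d' ≤ d)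
    (U : Finset (Finset (Fin d))) (hU : U.card = n) :
    (numCubes d d' U : ℝ) ≤ (n : ℝ) / 2 ^ d' * ((Nat.clog 2 n + 1).choose d' : ℝ) :=
  numCubes_upper_bound_general d d' n U hU
end

section
/- Let U, I ⊆ V(Q_d) with |U| = |I| where I is an initial segment of the binary order on subsets of [d]. Then for any d' ≤ d, the number of d'-dimensional subcubes contained in U is at most the number contained in I. -/
open SimpleGraph Finset Matrix

/-- The binary order on subsets of `[d]`: `S < T` iff `max (S △ T) ∈ T`. -/
def binLt (d : ℕ) (S T : Finset (Fin d)) : Prop :=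
  ∃ a ∈ symmDiff S T, a ∈ T ∧ ∀ b ∈ symmDiff S T, b ≤ a

/-!
Split along a coordinate `a`: a family `𝒜` becomes the families `𝒜₀`, `𝒜₁` of sets without and
with `a` (with `a` removed), and a `(k+1)`-cube of `𝒜` either lies in `𝒜₀`, lies in `𝒜₁`, or is a
`k`-cube of `𝒜₀ ∩ 𝒜₁` with `a` added as a free direction. This suggests the function `cubeBound`:
`f 0 n = n`, `f (k+1) n = f (k+1) ⌈n/2⌉ + f (k+1) ⌊n/2⌋ + f k ⌊n/2⌋`.

An initial segment of the binary order, split along its least coordinate, gives initial segments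
`𝒜₁ ⊆ 𝒜₀` of sizes `⌊n/2⌋` and `⌈n/2⌉`, so by induction it has at least `f k n` cubes of
dimension `k`. Conversely the inequality `f (k+1) a + f (k+1) b + f k (min a b) ≤ f (k+1) (a + b)`
shows, by induction on `#𝒜` splitting along any coordinate that separates two members of `𝒜`,
that every family of size `n` has at most `f k n` of them.
-/

section Cubes

variable {α : Type*} [DecidableEq α] [Fintype α]

def cubes (k : ℕ) (𝒜 : Finset (Finset α)) : Finset (Finset α × Finset α) :=
  univ.filter (fun p => Disjoint p.1 p.2 ∧ #p.2 = k ∧ ∀ T ∈ p.2.powerset, p.1 ∪ T ∈ 𝒜)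

theorem numCubes_eq_card_cubes (d k : ℕ) (U : Finset (Finset (Fin d))) :
    numCubes d k U = #(cubes k U) := rfl

variable {k : ℕ} {𝒜 : Finset (Finset α)} {a : α} {p : Finset α × Finset α}

theorem mem_cubes :
    p ∈ cubes k 𝒜 ↔ Disjoint p.1 p.2 ∧ #p.2 = k ∧ ∀ T ⊆ p.2, p.1 ∪ T ∈ 𝒜 := by
  simp [cubes]

theorem notMem_of_mem_cubes (h𝒜 : ∀ s ∈ 𝒜, a ∉ s) (hp : p ∈ cubes k 𝒜) :
    a ∉ p.1 ∧ a ∉ p.2 := by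
  obtain ⟨-, -, hp⟩ := mem_cubes.1 hp
  have h₁ := h𝒜 _ (hp ∅ (empty_subset _))
  have h₂ := h𝒜 _ (hp _ subset_rfl)
  rw [union_empty] at h₁
  exact ⟨h₁, fun ha => h₂ (mem_union_right _ ha)⟩

theorem card_cubes_zero (𝒜 : Finset (Finset α)) : #(cubes 0 𝒜) = #𝒜 := by
  refine card_nbij' Prod.fst (fun s => (s, ∅)) ?_ ?_ ?_ ?_
  · intro p hp
    simpa using (mem_cubes.1 hp).2.2 ∅ (empty_subset _)
  · intro s hs
    simpa [mem_cubes] using hs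
  · intro p hp
    obtain ⟨-, hcard, -⟩ := mem_cubes.1 hp
    exact Prod.ext rfl (card_eq_zero.1 hcard).symm
  · intro s _
    rfl

theorem cubes_succ_eq_empty (h𝒜 : #𝒜 ≤ 1) : cubes (k + 1) 𝒜 = ∅ := by
  refine eq_empty_of_forall_notMem fun p hp => ?_
  obtain ⟨hdisj, hcard, hp⟩ := mem_cubes.1 hp
  have hsub : p.1 ∪ p.2 = p.1 ∪ ∅ :=
    card_le_one.1 h𝒜 _ (hp _ subset_rfl) _ (hp _ (empty_subset _))
  rw [union_empty, union_eq_left] at hsub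
  have : p.2 = ∅ := disjoint_self_iff_empty _ |>.1 (hdisj.mono_left hsub)
  simp [this] at hcard

theorem filter_cubes_notMem :
    {p ∈ cubes k 𝒜 | a ∉ p.1 ∧ a ∉ p.2} = cubes k (𝒜.nonMemberSubfamily a) := by
  ext p
  constructor
  · intro hp
    obtain ⟨hp, ha₁, ha₂⟩ := mem_filter.1 hp
    obtain ⟨hdisj, hcard, hp⟩ := mem_cubes.1 hp
    refine mem_cubes.2 ⟨hdisj, hcard, fun T hT => mem_nonMemberSubfamily.2 ⟨hp T hT, ?_⟩⟩
    exact notMem_union.2 ⟨ha₁, fun ha => ha₂ (hT ha)⟩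
  · intro hp
    have ha := notMem_of_mem_cubes (fun s hs => (mem_nonMemberSubfamily.1 hs).2) hp
    obtain ⟨hdisj, hcard, hp⟩ := mem_cubes.1 hp
    exact mem_filter.2
      ⟨mem_cubes.2 ⟨hdisj, hcard, fun T hT => (mem_nonMemberSubfamily.1 (hp T hT)).1⟩, ha⟩

theorem card_filter_cubes_mem_fst :
    #{p ∈ cubes k 𝒜 | a ∈ p.1} = #(cubes k (𝒜.memberSubfamily a)) := by
  refine card_nbij' (fun p => (p.1.erase a, p.2)) (fun q => (insert a q.1, q.2)) ?_ ?_ ?_ ?_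
  · intro p hp
    obtain ⟨hp, ha⟩ := mem_filter.1 hp
    obtain ⟨hdisj, hcard, hp⟩ := mem_cubes.1 hp
    refine mem_cubes.2 ⟨hdisj.mono_left (erase_subset _ _), hcard, fun T hT => ?_⟩
    have haT : a ∉ T := fun h => disjoint_left.1 hdisj ha (hT h)
    refine mem_memberSubfamily.2 ⟨?_, notMem_union.2 ⟨notMem_erase _ _, haT⟩⟩
    rw [← insert_union, insert_erase ha]
    exact hp T hT
  · intro q hq
    have ha := notMem_of_mem_cubes (fun s hs => (mem_memberSubfamily.1 hs).2) hq
    obtain ⟨hdisj, hcard, hq⟩ := mem_cubes.1 hq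
    refine mem_filter.2 ⟨mem_cubes.2 ⟨disjoint_insert_left.2 ⟨ha.2, hdisj⟩, hcard, fun T hT => ?_⟩,
      mem_insert_self _ _⟩
    rw [insert_union]
    exact (mem_memberSubfamily.1 (hq T hT)).1
  · intro p hp
    have ha := (mem_filter.1 hp).2
    exact Prod.ext (insert_erase ha) rfl
  · intro q hq
    have ha := notMem_of_mem_cubes (fun s hs => (mem_memberSubfamily.1 hs).2) hq
    exact Prod.ext (erase_insert ha.1) rfl

theorem card_filter_cubes_mem_snd :
    #{p ∈ cubes (k + 1) 𝒜 | a ∈ p.2} =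
      #(cubes k (𝒜.nonMemberSubfamily a ∩ 𝒜.memberSubfamily a)) := by
  refine card_nbij' (fun p => (p.1, p.2.erase a)) (fun q => (q.1, insert a q.2)) ?_ ?_ ?_ ?_
  · intro p hp
    obtain ⟨hp, ha⟩ := mem_filter.1 hp
    obtain ⟨hdisj, hcard, hp⟩ := mem_cubes.1 hp
    refine mem_cubes.2 ⟨hdisj.mono_right (erase_subset _ _), by simp [card_erase_of_mem ha, hcard],
      fun T hT => ?_⟩
    have haT : a ∉ p.1 ∪ T :=
      notMem_union.2 ⟨fun h => disjoint_left.1 hdisj h ha, fun h => notMem_erase a _ (hT h)⟩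
    refine mem_inter.2 ⟨mem_nonMemberSubfamily.2 ⟨hp T (hT.trans (erase_subset _ _)), haT⟩,
      mem_memberSubfamily.2 ⟨?_, haT⟩⟩
    rw [← union_insert]
    exact hp _ (insert_subset ha (hT.trans (erase_subset _ _)))
  · intro q hq
    have ha := notMem_of_mem_cubes (fun s hs => (mem_nonMemberSubfamily.1 (mem_inter.1 hs).1).2) hq
    obtain ⟨hdisj, hcard, hq⟩ := mem_cubes.1 hq
    refine mem_filter.2 ⟨mem_cubes.2 ⟨disjoint_insert_right.2 ⟨ha.1, hdisj⟩,
      by rw [card_insert_of_notMem ha.2, hcard], fun T hT => ?_⟩, mem_insert_self _ _⟩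
    obtain ⟨hnon, hmem⟩ := mem_inter.1 (hq _ (subset_insert_iff.1 hT))
    by_cases haT : a ∈ T
    · rw [← insert_erase haT, union_insert]
      exact (mem_memberSubfamily.1 hmem).1
    · rw [← erase_eq_of_notMem haT]
      exact (mem_nonMemberSubfamily.1 hnon).1
  · intro p hp
    have ha := (mem_filter.1 hp).2
    exact Prod.ext rfl (insert_erase ha)
  · intro q hq
    have ha := notMem_of_mem_cubes (fun s hs => (mem_nonMemberSubfamily.1 (mem_inter.1 hs).1).2) hq
    exact Prod.ext rfl (erase_insert ha.2)

theorem card_cubes_succ (a : α) (𝒜 : Finset (Finset α)) :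
    #(cubes (k + 1) 𝒜) = #(cubes (k + 1) (𝒜.nonMemberSubfamily a)) +
      #(cubes (k + 1) (𝒜.memberSubfamily a)) +
      #(cubes k (𝒜.nonMemberSubfamily a ∩ 𝒜.memberSubfamily a)) := by
  rw [← filter_cubes_notMem, ← card_filter_cubes_mem_fst, ← card_filter_cubes_mem_snd,
    ← card_filter_add_card_filter_not (fun p => a ∈ p.1),
    ← card_filter_add_card_filter_not (s := {p ∈ cubes (k + 1) 𝒜 | a ∉ p.1}) (fun p => a ∈ p.2),
    filter_filter, filter_filter]
  have hsnd : {p ∈ cubes (k + 1) 𝒜 | a ∉ p.1 ∧ a ∈ p.2} = {p ∈ cubes (k + 1) 𝒜 | a ∈ p.2} :=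
    filter_congr fun p hp => ⟨And.right, fun ha => ⟨fun h =>
      disjoint_left.1 (mem_cubes.1 hp).1 h ha, ha⟩⟩
  rw [hsnd]
  ring

end Cubes

def cubeBound : ℕ → ℕ → ℕ
  | 0, n => n
  | _ + 1, 0 => 0
  | _ + 1, 1 => 0
  | k + 1, n + 2 =>
    cubeBound (k + 1) ((n + 3) / 2) + cubeBound (k + 1) ((n + 2) / 2) + cubeBound k ((n + 2) / 2)

theorem cubeBound_zero_left (n : ℕ) : cubeBound 0 n = n := by
  rw [cubeBound]

theorem cubeBound_succ_of_le_one {k n : ℕ} (hn : n ≤ 1) : cubeBound (k + 1) n = 0 := by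
  interval_cases n <;> rw [cubeBound]

theorem cubeBound_zero_right (k : ℕ) : cubeBound k 0 = 0 := by
  cases k with
  | zero => exact cubeBound_zero_left 0
  | succ k => exact cubeBound_succ_of_le_one zero_le_one

theorem cubeBound_succ (k n : ℕ) :
    cubeBound (k + 1) n =
      cubeBound (k + 1) ((n + 1) / 2) + cubeBound (k + 1) (n / 2) + cubeBound k (n / 2) := by
  match n with
  | 0 | 1 => simp [cubeBound_succ_of_le_one, cubeBound_zero_right]
  | n + 2 => rw [cubeBound]

theorem cubeBound_mono (k : ℕ) : Monotone (cubeBound k) := by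
  intro m n hmn
  induction n using Nat.strong_induction_on generalizing k m with
  | _ n ih =>
  cases k with
  | zero => simpa only [cubeBound_zero_left]
  | succ k =>
    rcases le_or_gt n 1 with hn | hn
    · rw [cubeBound_succ_of_le_one (hmn.trans hn)]
      exact Nat.zero_le _
    · rw [cubeBound_succ k m, cubeBound_succ k n]
      exact add_le_add (add_le_add (ih _ (by omega) _ (by omega)) (ih _ (by omega) _ (by omega)))
        (ih _ (by omega) _ (by omega))

theorem cubeBound_superadditive (k a b : ℕ) :
    cubeBound (k + 1) a + cubeBound (k + 1) b + cubeBound k (min a b) ≤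
      cubeBound (k + 1) (a + b) := by
  induction h : a + b using Nat.strong_induction_on generalizing k a b with
  | _ N ih =>
  subst h
  wlog hba : b ≤ a generalizing a b
  · simpa only [add_comm, min_comm] using this b a (by simpa only [add_comm] using ih) (by omega)
  rcases Nat.eq_zero_or_pos b with rfl | hb
  · simp [cubeBound_zero_right]
  rw [min_eq_right hba, cubeBound_succ k a, cubeBound_succ k b, cubeBound_succ k (a + b)]
  -- Pair `⌈a/2⌉` with `⌊b/2⌋` and `⌊a/2⌋` with `⌈b/2⌉`: the two sums are `⌈(a+b)/2⌉` and
  -- `⌊(a+b)/2⌋` in some order.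
  have h₁ := ih _ (by omega) k ((a + 1) / 2) (b / 2) rfl
  have h₂ := ih _ (by omega) k (a / 2) ((b + 1) / 2) rfl
  rw [min_eq_right (by omega)] at h₁
  have hk : cubeBound k (a / 2) + cubeBound k b ≤
      cubeBound k ((a + b) / 2) + cubeBound k (min (a / 2) ((b + 1) / 2)) := by
    rcases le_total (a / 2) ((b + 1) / 2) with hab | hab
    · rw [min_eq_left hab, add_comm]
      exact Nat.add_le_add_right (cubeBound_mono k (by omega)) _
    rw [min_eq_right hab]
    cases k with
    | zero => simp only [cubeBound_zero_left]; omega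
    | succ j =>
      have h₃ := ih _ (by omega) j (a / 2) (b / 2) rfl
      have h₄ := cubeBound_mono (j + 1) (show a / 2 + b / 2 ≤ (a + b) / 2 by omega)
      rw [min_eq_right (by omega)] at h₃
      rw [cubeBound_succ j b]
      omega
  obtain ⟨e₁, e₂⟩ | ⟨e₁, e₂⟩ :
      ((a + 1) / 2 + b / 2 = (a + b + 1) / 2 ∧ a / 2 + (b + 1) / 2 = (a + b) / 2) ∨
      ((a + 1) / 2 + b / 2 = (a + b) / 2 ∧ a / 2 + (b + 1) / 2 = (a + b + 1) / 2) := by omega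
  all_goals rw [e₁] at h₁; rw [e₂] at h₂; omega

theorem exists_card_memberSubfamily_lt {α : Type*} [DecidableEq α] {𝒜 : Finset (Finset α)}
    (h𝒜 : 1 < #𝒜) :
    ∃ a, #(𝒜.memberSubfamily a) < #𝒜 ∧ #(𝒜.nonMemberSubfamily a) < #𝒜 := by
  obtain ⟨s, hs, t, ht, hst⟩ := one_lt_card.1 h𝒜
  obtain ⟨a, ha⟩ := symmDiff_nonempty.2 hst
  refine ⟨a, ?_⟩
  have hsplit := card_memberSubfamily_add_card_nonMemberSubfamily a 𝒜
  suffices ∃ u ∈ 𝒜, ∃ v ∈ 𝒜, a ∈ u ∧ a ∉ v by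
    obtain ⟨u, hu, v, hv, hau, hav⟩ := this
    have hmem : 0 < #(𝒜.memberSubfamily a) :=
      card_pos.2 ⟨u.erase a, mem_memberSubfamily.2 ⟨by rwa [insert_erase hau], notMem_erase _ _⟩⟩
    have hnon : 0 < #(𝒜.nonMemberSubfamily a) :=
      card_pos.2 ⟨v, mem_nonMemberSubfamily.2 ⟨hv, hav⟩⟩
    omega
  rcases mem_symmDiff.1 ha with ⟨has, hat⟩ | ⟨hat, has⟩
  · exact ⟨s, hs, t, ht, has, hat⟩
  · exact ⟨t, ht, s, hs, hat, has⟩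

section UpperBound

variable {α : Type*} [DecidableEq α] [Fintype α]

theorem card_cubes_le_cubeBound (k : ℕ) (𝒜 : Finset (Finset α)) :
    #(cubes k 𝒜) ≤ cubeBound k #𝒜 := by
  induction h : #𝒜 using Nat.strong_induction_on generalizing k 𝒜 with
  | _ n ih =>
  subst h
  cases k with
  | zero => rw [card_cubes_zero, cubeBound_zero_left]
  | succ k =>
    rcases le_or_gt #𝒜 1 with h𝒜 | h𝒜
    · simp [cubes_succ_eq_empty h𝒜]
    obtain ⟨a, hmem, hnon⟩ := exists_card_memberSubfamily_lt h𝒜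
    set 𝒜₀ := 𝒜.nonMemberSubfamily a
    set 𝒜₁ := 𝒜.memberSubfamily a
    have hinter : #(𝒜₀ ∩ 𝒜₁) ≤ min #𝒜₀ #𝒜₁ :=
      le_min (card_le_card inter_subset_left) (card_le_card inter_subset_right)
    calc #(cubes (k + 1) 𝒜)
        = #(cubes (k + 1) 𝒜₀) + #(cubes (k + 1) 𝒜₁) + #(cubes k (𝒜₀ ∩ 𝒜₁)) :=
          card_cubes_succ a 𝒜
      _ ≤ cubeBound (k + 1) #𝒜₀ + cubeBound (k + 1) #𝒜₁ + cubeBound k (min #𝒜₀ #𝒜₁) :=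
          add_le_add (add_le_add (ih _ hnon _ _ rfl) (ih _ hmem _ _ rfl))
            ((ih _ ((card_le_card inter_subset_left).trans_lt hnon) _ _ rfl).trans
              (cubeBound_mono k hinter))
      _ ≤ cubeBound (k + 1) (#𝒜₀ + #𝒜₁) := cubeBound_superadditive k _ _
      _ = cubeBound (k + 1) #𝒜 := congrArg (cubeBound (k + 1))
          ((add_comm _ _).trans (card_memberSubfamily_add_card_nonMemberSubfamily a 𝒜))

end UpperBound

section BinaryOrder

variable {d : ℕ} {S T : Finset (Fin d)} {a : Fin d}

theorem binLt_or_binLt_of_ne (h : S ≠ T) : binLt d S T ∨ binLt d T S := by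
  have hne := symmDiff_nonempty.2 h
  have hle : ∀ b ∈ symmDiff S T, b ≤ (symmDiff S T).max' hne := fun b hb => le_max' _ _ hb
  rcases mem_symmDiff.1 (max'_mem _ hne) with ⟨hS, hT⟩ | ⟨hT, hS⟩
  · exact Or.inr ⟨_, by rw [symmDiff_comm]; exact max'_mem _ hne, hS,
      fun b hb => hle b (by rwa [symmDiff_comm])⟩
  · exact Or.inl ⟨_, max'_mem _ hne, hT, hle⟩

theorem binLt_insert_self (ha : a ∉ S) : binLt d S (insert a S) := by
  refine ⟨a, by simp [mem_symmDiff, ha], mem_insert_self _ _, fun b hb => ?_⟩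
  rw [mem_symmDiff, mem_insert] at hb
  rcases hb with ⟨hbS, hb⟩ | ⟨rfl | hbS, hb⟩ <;> simp_all

theorem binLt.insert_insert (h : binLt d S T) (ha : a ∉ T) :
    binLt d (insert a S) (insert a T) := by
  obtain ⟨m, hm, hmT, hmax⟩ := h
  have hma : m ≠ a := fun h => ha (h ▸ hmT)
  refine ⟨m, ?_, mem_insert_of_mem hmT, fun b hb => hmax b ?_⟩
  · simpa [mem_symmDiff, hma] using hm
  · simp only [mem_symmDiff, mem_insert] at hb ⊢
    tauto

theorem binLt.insert_left (h : binLt d S T) (ha : ∀ x ∈ T, a < x) : binLt d (insert a S) T := by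
  obtain ⟨m, hm, hmT, hmax⟩ := h
  have hma : m ≠ a := (ha m hmT).ne'
  refine ⟨m, ?_, hmT, fun b hb => ?_⟩
  · simpa [mem_symmDiff, hma] using hm
  · by_cases hba : b = a
    · exact hba ▸ (ha m hmT).le
    · exact hmax b (by simpa [mem_symmDiff, hba] using hb)

end BinaryOrder

section InitialSegment

variable {d : ℕ}

def IsInitialSegment (s : Finset (Fin d)) (I : Finset (Finset (Fin d))) : Prop :=
  (∀ S ∈ I, S ⊆ s) ∧ ∀ T ∈ I, ∀ S ⊆ s, binLt d S T → S ∈ I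

variable {s : Finset (Fin d)} {I : Finset (Finset (Fin d))} {a : Fin d}

theorem IsInitialSegment.nonMemberSubfamily (hI : IsInitialSegment (insert a s) I)
    (has : a ∉ s) : IsInitialSegment s (I.nonMemberSubfamily a) := by
  refine ⟨fun S hS => ?_, fun T hT S hS hST => ?_⟩
  · obtain ⟨hS, haS⟩ := mem_nonMemberSubfamily.1 hS
    exact (subset_insert_iff_of_notMem haS).1 (hI.1 S hS)
  · exact mem_nonMemberSubfamily.2 ⟨hI.2 T (mem_nonMemberSubfamily.1 hT).1 S
      (hS.trans (subset_insert _ _)) hST, fun h => has (hS h)⟩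

theorem IsInitialSegment.memberSubfamily (hI : IsInitialSegment (insert a s) I)
    (has : a ∉ s) : IsInitialSegment s (I.memberSubfamily a) := by
  refine ⟨fun S hS => ?_, fun T hT S hS hST => ?_⟩
  · obtain ⟨hS, haS⟩ := mem_memberSubfamily.1 hS
    exact (subset_insert_iff_of_notMem haS).1 ((subset_insert _ _).trans (hI.1 _ hS))
  · obtain ⟨hT, haT⟩ := mem_memberSubfamily.1 hT
    exact mem_memberSubfamily.2 ⟨hI.2 _ hT _ (insert_subset_insert _ hS) (hST.insert_insert haT),
      fun h => has (hS h)⟩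

theorem IsInitialSegment.memberSubfamily_subset_nonMemberSubfamily
    (hI : IsInitialSegment (insert a s) I) : I.memberSubfamily a ⊆ I.nonMemberSubfamily a := by
  intro S hS
  obtain ⟨hS, haS⟩ := mem_memberSubfamily.1 hS
  exact mem_nonMemberSubfamily.2
    ⟨hI.2 _ hS _ ((subset_insert _ _).trans (hI.1 _ hS)) (binLt_insert_self haS), haS⟩

/-- Adding the least coordinate `a` to the smaller of two sets keeps it below the larger one, so
every member of `I` without `a` except the largest has its `a`-neighbour in `I`. -/
theorem IsInitialSegment.card_nonMemberSubfamily_le (hI : IsInitialSegment (insert a s) I)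
    (ha : ∀ x ∈ s, a < x) : #(I.nonMemberSubfamily a) ≤ #(I.memberSubfamily a) + 1 := by
  have hI₀ := hI.nonMemberSubfamily fun h => lt_irrefl a (ha a h)
  have hgap : #(I.nonMemberSubfamily a \ I.memberSubfamily a) ≤ 1 := by
    refine card_le_one.2 fun S hS S' hS' => by_contra fun hne => ?_
    rw [mem_sdiff] at hS hS'
    have hinsert : ∀ {S S'}, S ∈ I.nonMemberSubfamily a → S' ∈ I.nonMemberSubfamily a →
        binLt d S S' → S ∈ I.memberSubfamily a := fun hS hS' hSS' =>
      mem_memberSubfamily.2 ⟨hI.2 _ (mem_nonMemberSubfamily.1 hS').1 _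
        (insert_subset_insert _ (hI₀.1 _ hS))
        (hSS'.insert_left fun x hx => ha x (hI₀.1 _ hS' hx)), (mem_nonMemberSubfamily.1 hS).2⟩
    rcases binLt_or_binLt_of_ne hne with h | h
    · exact hS.2 (hinsert hS.1 hS'.1 h)
    · exact hS'.2 (hinsert hS'.1 hS.1 h)
  have := card_sdiff_add_card_eq_card hI.memberSubfamily_subset_nonMemberSubfamily
  omega

theorem cubeBound_le_card_cubes (k : ℕ) (hI : IsInitialSegment s I) :
    cubeBound k #I ≤ #(cubes k I) := by
  induction s using Finset.induction_on_min generalizing I k with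
  | empty =>
    cases k with
    | zero => rw [card_cubes_zero, cubeBound_zero_left]
    | succ k =>
      have hI₁ : #I ≤ 1 := card_le_one.2 fun S hS T hT => by
        rw [subset_empty.1 (hI.1 S hS), subset_empty.1 (hI.1 T hT)]
      rw [cubeBound_succ_of_le_one hI₁]
      exact Nat.zero_le _
  | insert a s ha ih =>
    cases k with
    | zero => rw [card_cubes_zero, cubeBound_zero_left]
    | succ k =>
      have has : a ∉ s := fun h => lt_irrefl a (ha a h)
      set I₀ := I.nonMemberSubfamily a
      set I₁ := I.memberSubfamily a
      have hsub : I₁ ⊆ I₀ := hI.memberSubfamily_subset_nonMemberSubfamily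
      have hsum : #I₁ + #I₀ = #I := card_memberSubfamily_add_card_nonMemberSubfamily a I
      have hgap : #I₀ ≤ #I₁ + 1 := hI.card_nonMemberSubfamily_le ha
      have hcard₀ : #I₀ = (#I + 1) / 2 := by have := card_le_card hsub; omega
      have hcard₁ : #I₁ = #I / 2 := by omega
      calc cubeBound (k + 1) #I
          = cubeBound (k + 1) #I₀ + cubeBound (k + 1) #I₁ + cubeBound k #I₁ := by
            rw [cubeBound_succ, hcard₀, hcard₁]
        _ ≤ #(cubes (k + 1) I₀) + #(cubes (k + 1) I₁) + #(cubes k I₁) :=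
            add_le_add (add_le_add (ih (k + 1) (hI.nonMemberSubfamily has))
              (ih (k + 1) (hI.memberSubfamily has))) (ih k (hI.memberSubfamily has))
        _ = #(cubes (k + 1) I) := by rw [card_cubes_succ a I, inter_eq_right.2 hsub]

end InitialSegment

theorem numCubes_le_initial_segment_general (d d' : ℕ)
    (U I : Finset (Finset (Fin d))) (hcard : U.card = I.card)
    (hI : ∀ T ∈ I, ∀ S, binLt d S T → S ∈ I) :
    numCubes d d' U ≤ numCubes d d' I := by
  rw [numCubes_eq_card_cubes, numCubes_eq_card_cubes]
  calc #(cubes d' U) ≤ cubeBound d' #U := card_cubes_le_cubeBound d' U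
    _ = cubeBound d' #I := by rw [hcard]
    _ ≤ #(cubes d' I) :=
      cubeBound_le_card_cubes d' ⟨fun S _ => subset_univ S, fun T hT S _ => hI T hT S⟩

theorem numCubes_le_initial_segment (d d' : ℕ) (hd : d' ≤ d)
    (U I : Finset (Finset (Fin d))) (hcard : U.card = I.card)
    (hI : ∀ T ∈ I, ∀ S, binLt d S T → S ∈ I) :
    numCubes d d' U ≤ numCubes d d' I :=
  numCubes_le_initial_segment_general d d' U I hcard hI
end

section
/- Let G be an induced subgraph of the hypercube Q_d with n ≤ d vertices, where n ≥ 103. Then λ₁(G) ≤ √(n−1), with equality if and only if G is a star K_{1,n−1}. -/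
open SimpleGraph Finset Matrix

/-!
Let `x ≥ 0` be an eigenvector of `λ = λ₁(G)`, scaled so that its largest entry is `x w = 1`, and
let `D₁, D₂, D₃` be the vertices of `G` at cube distance `1, 2, 3` from `w`. In the cube a vertex at
distance `j` from `w` has at most `j` neighbours at distance `j - 1` and none at distance `j`, so
unfolding `λ³ x_w = (A³ x)_w` along the layers gives `λ³ ≤ |D₁| λ + 4 |D₂| + 6 |D₃|`.
If `λ² ≥ n - 1` then `λ > 6`, and `|D₁| + |D₂| + |D₃| ≤ n - 1` forces `|D₁| = n - 1`, hence
`λ² ≤ n - 1`; moreover `w` is adjacent to all other vertices, and as the cube has no triangles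
`G` is a star.
-/

open scoped symmDiff

namespace Finset
variable {α : Type*} [DecidableEq α]

theorem symmDiff_symmDiff_symmDiff_cancel (a b c : Finset α) : (a ∆ b) ∆ (a ∆ c) = b ∆ c := by
  rw [symmDiff_symmDiff_symmDiff_comm, symmDiff_self, bot_symmDiff]

theorem singleton_symmDiff_of_mem {z : α} {s : Finset α} (h : z ∈ s) : {z} ∆ s = s.erase z := by
  rw [symmDiff_comm, Finset.symmDiff_def, sdiff_singleton_eq_erase,
    sdiff_eq_empty_iff_subset.2 (singleton_subset_iff.2 h), union_empty]

theorem singleton_symmDiff_of_notMem {z : α} {s : Finset α} (h : z ∉ s) :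
    {z} ∆ s = insert z s := by
  rw [symmDiff_eq_union (disjoint_singleton_left.2 h), insert_eq]

theorem card_symmDiff_eq_add_one_or {b c : Finset α} (hbc : #(b ∆ c) = 1) (w : Finset α) :
    #(c ∆ w) = #(b ∆ w) + 1 ∨ #(c ∆ w) + 1 = #(b ∆ w) := by
  obtain ⟨z, hz⟩ := card_eq_one.1 hbc
  rw [← symmDiff_symmDiff_symmDiff_cancel b c w, hz]
  by_cases h : z ∈ b ∆ w
  · exact .inr (by rw [singleton_symmDiff_of_mem h, card_erase_add_one h])
  · exact .inl (by rw [singleton_symmDiff_of_notMem h, card_insert_of_notMem h])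

theorem card_le_card_symmDiff_of_forall_closer {v w : Finset α} {F : Finset (Finset α)}
    (hF : ∀ u ∈ F, #(u ∆ v) = 1 ∧ #(u ∆ w) < #(v ∆ w)) : #F ≤ #(v ∆ w) := by
  have hmaps : ∀ u ∈ F, u ∆ v ∈ (v ∆ w).powersetCard 1 := by
    intro u hu
    obtain ⟨huv, hclose⟩ := hF u hu
    obtain ⟨z, hz⟩ := card_eq_one.1 huv
    have hzvw : z ∈ v ∆ w := by
      by_contra h
      rw [← symmDiff_symmDiff_symmDiff_cancel v u w, symmDiff_comm v u, hz,
        singleton_symmDiff_of_notMem h, card_insert_of_notMem h] at hclose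
      omega
    rw [mem_powersetCard, hz, singleton_subset_iff]
    exact ⟨hzvw, card_singleton z⟩
  simpa using card_le_card_of_injOn (· ∆ v) hmaps (symmDiff_left_injective v).injOn

end Finset

namespace Matrix

variable {V : Type*} [Fintype V] [DecidableEq V]

theorem setOf_hasEigenvalue_toLin' (A : Matrix V V ℝ) :
    {μ : ℝ | Module.End.HasEigenvalue (toLin' A) μ} = spectrum ℝ A := by
  ext μ
  rw [Set.mem_ofPred_eq, Module.End.hasEigenvalue_iff_mem_spectrum, spectrum_toLin']

theorem IsHermitian.posSemidef_sSup_spectrum_sub {A : Matrix V V ℝ} (hA : A.IsHermitian) :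
    (algebraMap ℝ (Matrix V V ℝ) (sSup (spectrum ℝ A)) - A).PosSemidef := by
  have hB : (algebraMap ℝ (Matrix V V ℝ) (sSup (spectrum ℝ A)) - A).IsHermitian :=
    (IsSelfAdjoint.algebraMap _ (.all _)).sub hA
  refine hB.posSemidef_iff_eigenvalues_nonneg.2 fun i => ?_
  have := hB.eigenvalues_mem_spectrum_real i
  rw [← spectrum.singleton_sub_eq, Set.singleton_sub] at this
  obtain ⟨μ, hμ, he⟩ := this
  rw [← he]
  exact sub_nonneg.2 <| le_csSup (finite_real_spectrum (A := A)).bddAbove hμ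

theorem IsHermitian.sSup_spectrum_mem {A : Matrix V V ℝ} (hA : A.IsHermitian) [Nonempty V] :
    sSup (spectrum ℝ A) ∈ spectrum ℝ A := by
  rw [hA.spectrum_real_eq_range_eigenvalues]
  exact (Set.range_nonempty _).csSup_mem (Set.finite_range _)

omit [DecidableEq V] in
theorem dotProduct_mulVec_le_abs_of_nonneg {A : Matrix V V ℝ} (hA : ∀ u v, 0 ≤ A u v)
    (y : V → ℝ) : y ⬝ᵥ (A *ᵥ y) ≤ (fun v => |y v|) ⬝ᵥ (A *ᵥ fun v => |y v|) := by
  simp only [dotProduct, mulVec, Finset.mul_sum]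
  refine Finset.sum_le_sum fun u _ => Finset.sum_le_sum fun v _ => ?_
  calc y u * (A u v * y v) ≤ |y u * (A u v * y v)| := le_abs_self _
    _ = |y u| * (A u v * |y v|) := by rw [abs_mul, abs_mul, abs_of_nonneg (hA u v)]

/-- Perron–Frobenius for symmetric matrices. If `A y = l y` for the top eigenvalue `l`, then
`|y|` has Rayleigh quotient at least `l`; as `l - A` is positive semidefinite, `|y|` lies in its
kernel. -/
theorem IsHermitian.exists_nonneg_mulVec_eq_sSup_spectrum_smul {A : Matrix V V ℝ}
    (hA : A.IsHermitian) (hA₀ : ∀ u v, 0 ≤ A u v) [Nonempty V] :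
    ∃ x : V → ℝ, 0 ≤ x ∧ x ≠ 0 ∧ A *ᵥ x = sSup (spectrum ℝ A) • x := by
  set l := sSup (spectrum ℝ A)
  set B := algebraMap ℝ (Matrix V V ℝ) l - A
  have hB : B.PosSemidef := hA.posSemidef_sSup_spectrum_sub
  have hBmulVec : ∀ z, B *ᵥ z = l • z - A *ᵥ z := fun z => by
    simp [B, sub_mulVec, Algebra.algebraMap_eq_smul_one, smul_mulVec]
  have hl : Module.End.HasEigenvalue (toLin' A) l := by
    rw [Module.End.hasEigenvalue_iff_mem_spectrum, spectrum_toLin']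
    exact hA.sSup_spectrum_mem
  obtain ⟨y, hy⟩ := hl.exists_hasEigenvector
  have hAy : A *ᵥ y = l • y := by simpa using hy.apply_eq_smul
  set x : V → ℝ := fun v => |y v|
  have hxx : x ⬝ᵥ x = y ⬝ᵥ y := by simp [x, dotProduct, abs_mul_abs_self]
  have hxBx : x ⬝ᵥ (B *ᵥ x) = 0 := by
    refine le_antisymm ?_ (by simpa using hB.dotProduct_mulVec_nonneg x)
    have hyAy : y ⬝ᵥ (A *ᵥ y) = l * (y ⬝ᵥ y) := by rw [hAy, dotProduct_smul, smul_eq_mul]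
    rw [hBmulVec, dotProduct_sub, dotProduct_smul, smul_eq_mul, hxx]
    linarith [dotProduct_mulVec_le_abs_of_nonneg hA₀ y]
  refine ⟨x, fun v => abs_nonneg (y v), fun hx => hy.2 (funext fun v => ?_), ?_⟩
  · simpa [x] using congrFun hx v
  · have := (hB.dotProduct_mulVec_zero_iff x).1 (by simpa using hxBx)
    rw [hBmulVec, sub_eq_zero] at this
    exact this.symm

end Matrix

section Spectral

variable {V : Type*} [Fintype V] [DecidableEq V] (G : SimpleGraph V) [DecidableRel G.Adj]

theorem lam1_eq_sSup_spectrum : lam1 G = sSup (spectrum ℝ (G.adjMatrix ℝ)) := by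
  rw [lam1, setOf_hasEigenvalue_toLin']

theorem le_lam1_of_mulVec_eq_smul {μ : ℝ} {y : V → ℝ} (hy : y ≠ 0)
    (h : G.adjMatrix ℝ *ᵥ y = μ • y) : μ ≤ lam1 G := by
  have hμ : Module.End.HasEigenvalue (toLin' (G.adjMatrix ℝ)) μ :=
    Module.End.hasEigenvalue_of_hasEigenvector
      ⟨Module.End.mem_eigenspace_iff.2 (by rwa [toLin'_apply]), hy⟩
  rw [Module.End.hasEigenvalue_iff_mem_spectrum, spectrum_toLin'] at hμ
  rw [lam1_eq_sSup_spectrum]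
  exact le_csSup (finite_real_spectrum (A := G.adjMatrix ℝ)).bddAbove hμ

theorem exists_perron_vector [Nonempty V] :
    ∃ (x : V → ℝ) (w : V), 0 ≤ x ∧ (∀ v, x v ≤ 1) ∧ x w = 1 ∧
      ∀ v, ∑ u ∈ G.neighborFinset v, x u = lam1 G * x v := by
  obtain ⟨y, hy₀, hy, hAy⟩ :=
    (G.isHermitian_adjMatrix ℝ).exists_nonneg_mulVec_eq_sSup_spectrum_smul
      fun u v => by rw [adjMatrix_apply]; split_ifs <;> norm_num
  rw [← lam1_eq_sSup_spectrum] at hAy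
  obtain ⟨w, -, hw⟩ := exists_max_image univ y univ_nonempty
  have hyw : 0 < y w := by
    obtain ⟨v, hv⟩ := Function.ne_iff.1 hy
    exact (lt_of_le_of_ne (hy₀ v) (Ne.symm hv)).trans_le (hw v (mem_univ v))
  refine ⟨fun v => y v / y w, w, fun v => div_nonneg (hy₀ v) hyw.le,
    fun v => (div_le_one hyw).2 (hw v (mem_univ v)), div_self hyw.ne', fun v => ?_⟩
  rw [← sum_div, ← adjMatrix_mulVec_apply, hAy, Pi.smul_apply, smul_eq_mul, mul_div_assoc]

theorem lam1_nonneg [Nonempty V] : 0 ≤ lam1 G := by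
  obtain ⟨x, w, hx₀, -, hxw, heig⟩ := exists_perron_vector G
  rw [← mul_one (lam1 G), ← hxw, ← heig]
  exact sum_nonneg fun u _ => hx₀ u

theorem sqrt_card_sub_one_le_lam1_of_star {c : V}
    (hc : ∀ a b, G.Adj a b ↔ (a = c ∧ b ≠ c) ∨ (b = c ∧ a ≠ c)) :
    √((Fintype.card V : ℝ) - 1) ≤ lam1 G := by
  set s := √((Fintype.card V : ℝ) - 1)
  have hNc : G.neighborFinset c = univ.erase c := by
    ext v; simp [hc, eq_comm]
  have hNv : ∀ v ≠ c, G.neighborFinset v = {c} := fun v hv => by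
    ext u; simp [hc, hv]
  -- scaled as `(1, s⁻¹, …, s⁻¹)`, not `(s, 1, …, 1)`, which vanishes for the one-vertex star
  refine le_lam1_of_mulVec_eq_smul G (y := fun v => if v = c then 1 else s⁻¹)
    (Function.ne_iff.2 ⟨c, by simp⟩) (funext fun v => ?_)
  rw [adjMatrix_mulVec_apply, Pi.smul_apply, smul_eq_mul]
  by_cases hv : v = c
  · subst hv
    rw [hNc, sum_congr rfl fun u hu => if_neg (ne_of_mem_erase hu), sum_const,
      card_erase_of_mem (mem_univ _), card_univ, nsmul_eq_mul,
      Nat.cast_sub (Fintype.card_pos_iff.2 ⟨v⟩), Nat.cast_one, if_pos rfl, mul_one,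
      ← div_eq_mul_inv, Real.div_sqrt]
  · have hs : s ≠ 0 := by
      have : (1 : ℝ) < Fintype.card V := by exact_mod_cast Fintype.one_lt_card_iff.2 ⟨v, c, hv⟩
      exact (Real.sqrt_pos.2 (by linarith)).ne'
    rw [hNv v hv, sum_singleton, if_pos rfl, if_neg hv, mul_inv_cancel₀ hs]

end Spectral

section CubeLayers

variable {W : Type*} {G : SimpleGraph W} {d : ℕ}

theorem cube_embedding_adj_iff (f : G ↪g cube d) {u v : W} :
    G.Adj u v ↔ #(f u ∆ f v) = 1 :=
  f.map_adj_iff.symm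

theorem cube_embedding_not_adj_of_adj_of_adj (f : G ↪g cube d) {a b c : W} (hab : G.Adj a b)
    (hbc : G.Adj b c) : ¬ G.Adj a c := by
  rw [cube_embedding_adj_iff f, symmDiff_comm] at hab ⊢
  have := card_symmDiff_eq_add_one_or ((cube_embedding_adj_iff f).1 hbc) (f a)
  omega

theorem adj_iff_of_isUniversal (f : G ↪g cube d) {w : W} (hw : G.IsUniversal w) (a b : W) :
    G.Adj a b ↔ (a = w ∧ b ≠ w) ∨ (b = w ∧ a ≠ w) := by
  have hadj : ∀ v, v ≠ w → G.Adj w v := fun v hv => hw (Ne.symm hv)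
  constructor
  · intro hab
    by_cases ha : a = w
    · exact .inl ⟨ha, fun hb => G.ne_of_adj hab (ha.trans hb.symm)⟩
    by_cases hb : b = w
    · exact .inr ⟨hb, ha⟩
    exact absurd (hadj b hb) (cube_embedding_not_adj_of_adj_of_adj f (hadj a ha) hab)
  · rintro (⟨rfl, hb⟩ | ⟨rfl, ha⟩)
    · exact hadj b hb
    · exact (hadj a ha).symm

variable [Fintype W] (f : G ↪g cube d)

def cubeLayer (w : W) (j : ℕ) : Finset W := {v | #(f v ∆ f w) = j}

variable {f}

@[simp]
theorem mem_cubeLayer {w v : W} {j : ℕ} : v ∈ cubeLayer f w j ↔ #(f v ∆ f w) = j := by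
  simp [cubeLayer]

theorem disjoint_cubeLayer (w : W) {i j : ℕ} (hij : i ≠ j) :
    Disjoint (cubeLayer f w i) (cubeLayer f w j) :=
  disjoint_filter.2 fun _ _ hi hj => hij (hi.symm.trans hj)

theorem mem_cubeLayer_of_adj {w u v : W} {j : ℕ} (hv : v ∈ cubeLayer f w (j + 1))
    (huv : G.Adj v u) : u ∈ cubeLayer f w j ∨ u ∈ cubeLayer f w (j + 2) := by
  simp only [mem_cubeLayer] at hv ⊢
  have := card_symmDiff_eq_add_one_or ((cube_embedding_adj_iff f).1 huv) (f w)
  omega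

theorem cubeLayer_zero (w : W) : cubeLayer f w 0 = {w} := by
  ext v
  simp [f.injective.eq_iff]

theorem card_cubeLayer_one_add_two_add_three_lt (w : W) :
    #(cubeLayer f w 1) + #(cubeLayer f w 2) + #(cubeLayer f w 3) < Fintype.card W := by
  have h := (sum_card_fiberwise_eq_card_filter univ (range 4) fun v => #(f v ∆ f w)).trans_le
    (card_filter_le _ _)
  simp only [sum_range_succ, sum_range_zero] at h
  have h0 := congrArg card (cubeLayer_zero (f := f) w)
  simp only [cubeLayer, card_singleton] at h0
  rw [card_univ] at h
  simp only [cubeLayer]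
  omega

variable [DecidableRel G.Adj]

theorem neighborFinset_eq_cubeLayer_one (w : W) : G.neighborFinset w = cubeLayer f w 1 := by
  ext v
  rw [mem_neighborFinset, mem_cubeLayer, cube_embedding_adj_iff f, symmDiff_comm]

theorem card_filter_adj_cubeLayer_le {w v : W} {j : ℕ} (hv : v ∈ cubeLayer f w (j + 1)) :
    #{u ∈ cubeLayer f w j | G.Adj v u} ≤ j + 1 := by
  rw [mem_cubeLayer] at hv
  rw [← hv, ← card_map f.toEmbedding]
  refine card_le_card_symmDiff_of_forall_closer fun S hS => ?_
  obtain ⟨u, hu, rfl⟩ := mem_map.1 hS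
  rw [mem_filter, mem_cubeLayer] at hu
  refine ⟨?_, by simp [hu.1, hv]⟩
  rw [symmDiff_comm]
  exact (cube_embedding_adj_iff f).1 hu.2

variable [DecidableEq W]

theorem neighborFinset_eq_union_cubeLayer {w v : W} {j : ℕ} (hv : v ∈ cubeLayer f w (j + 1)) :
    G.neighborFinset v =
      {u ∈ cubeLayer f w j | G.Adj v u} ∪ {u ∈ cubeLayer f w (j + 2) | G.Adj v u} := by
  ext u
  simp only [mem_neighborFinset, mem_union, mem_filter]
  have := mem_cubeLayer_of_adj (u := u) hv
  tauto

theorem sq_eq_of_cube_embedding {x : W → ℝ} {l : ℝ} {w : W} (hxw : x w = 1)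
    (heig : ∀ v, ∑ u ∈ G.neighborFinset v, x u = l * x v) :
    l ^ 2 = #(cubeLayer f w 1) +
      ∑ p ∈ cubeLayer f w 2, (#{u ∈ cubeLayer f w 1 | G.Adj p u} : ℝ) * x p := by
  have hl : l = ∑ u ∈ cubeLayer f w 1, x u := by
    rw [← neighborFinset_eq_cubeLayer_one, heig, hxw, mul_one]
  have hD1 : ∀ u ∈ cubeLayer f w 1, l * x u = 1 + ∑ p ∈ cubeLayer f w 2 with G.Adj u p, x p := by
    intro u hu
    have huw : G.Adj u w := by
      rw [cube_embedding_adj_iff f]; simpa using hu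
    rw [← heig, neighborFinset_eq_union_cubeLayer (j := 0) hu,
      sum_union (disjoint_filter_filter (disjoint_cubeLayer w (by norm_num))), cubeLayer_zero,
      filter_singleton, if_pos huw, sum_singleton, hxw]
  have hswap := sum_sum_bipartiteAbove_eq_sum_sum_bipartiteBelow G.Adj (fun _ p => x p)
    (s := cubeLayer f w 1) (t := cubeLayer f w 2)
  simp only [bipartiteAbove, bipartiteBelow, sum_const, nsmul_eq_mul] at hswap
  calc l ^ 2 = l * ∑ u ∈ cubeLayer f w 1, x u := by rw [← hl, sq]
    _ = ∑ u ∈ cubeLayer f w 1, (1 + ∑ p ∈ cubeLayer f w 2 with G.Adj u p, x p) := by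
        rw [mul_sum]; exact sum_congr rfl hD1
    _ = _ := by simp only [sum_add_distrib, sum_const, nsmul_one, hswap, G.adj_comm]

omit [DecidableEq W] in
theorem sum_card_filter_adj_cubeLayer_three_le (w : W) :
    ∑ p ∈ cubeLayer f w 2, #{q ∈ cubeLayer f w 3 | G.Adj p q} ≤ 3 * #(cubeLayer f w 3) :=
  calc ∑ p ∈ cubeLayer f w 2, #{q ∈ cubeLayer f w 3 | G.Adj p q}
      = ∑ q ∈ cubeLayer f w 3, #{p ∈ cubeLayer f w 2 | G.Adj p q} :=
        sum_card_bipartiteAbove_eq_sum_card_bipartiteBelow G.Adj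
    _ ≤ #(cubeLayer f w 3) • 3 := sum_le_card_nsmul _ _ _ fun q hq => by
        simpa only [G.adj_comm] using card_filter_adj_cubeLayer_le (j := 2) hq
    _ = 3 * #(cubeLayer f w 3) := by rw [smul_eq_mul, mul_comm]

theorem pow_three_le_of_cube_embedding {x : W → ℝ} {l : ℝ} {w : W} (hx : ∀ v, x v ≤ 1)
    (hxw : x w = 1) (heig : ∀ v, ∑ u ∈ G.neighborFinset v, x u = l * x v) :
    l ^ 3 ≤ #(cubeLayer f w 1) * l + 4 * #(cubeLayer f w 2) + 6 * #(cubeLayer f w 3) := by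
  set c : W → ℕ := fun p => #{u ∈ cubeLayer f w 1 | G.Adj p u}
  set e : W → ℕ := fun p => #{q ∈ cubeLayer f w 3 | G.Adj p q}
  have hdeg : ∀ p ∈ cubeLayer f w 2, l * x p ≤ c p + e p := by
    intro p hp
    rw [← heig]
    calc ∑ u ∈ G.neighborFinset p, x u ≤ #(G.neighborFinset p) • (1 : ℝ) :=
          sum_le_card_nsmul _ _ _ fun u _ => hx u
      _ ≤ c p + e p := by
          rw [nsmul_one, neighborFinset_eq_union_cubeLayer (j := 1) hp]
          exact_mod_cast (card_union_le _ _ : _ ≤ c p + e p)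
  have hwalks : ∀ p ∈ cubeLayer f w 2, c p * (l * x p) ≤ 4 + 2 * e p := by
    intro p hp
    have hc : (c p : ℝ) ≤ 2 := by exact_mod_cast card_filter_adj_cubeLayer_le (j := 1) hp
    have he : (0 : ℝ) ≤ e p := Nat.cast_nonneg _
    nlinarith [mul_le_mul_of_nonneg_left (hdeg p hp) (Nat.cast_nonneg (α := ℝ) (c p))]
  have he : (∑ p ∈ cubeLayer f w 2, (e p : ℝ)) ≤ 3 * #(cubeLayer f w 3) := by
    exact_mod_cast sum_card_filter_adj_cubeLayer_three_le w
  calc l ^ 3 = #(cubeLayer f w 1) * l + ∑ p ∈ cubeLayer f w 2, c p * (l * x p) := by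
        rw [pow_succ', sq_eq_of_cube_embedding hxw heig, mul_add, mul_sum]
        congr 1
        · ring
        · exact sum_congr rfl fun p _ => by ring
    _ ≤ #(cubeLayer f w 1) * l + ∑ p ∈ cubeLayer f w 2, (4 + 2 * (e p : ℝ)) := by
        gcongr with p hp
        exact hwalks p hp
    _ ≤ #(cubeLayer f w 1) * l + 4 * #(cubeLayer f w 2) + 6 * #(cubeLayer f w 3) := by
        rw [sum_add_distrib, sum_const, nsmul_eq_mul, ← mul_sum]
        linarith

end CubeLayers

theorem le_of_pow_three_le_of_le_sq {l k a b N : ℝ} (hN : 36 < N) (hl : 0 ≤ l) (hNl : N ≤ l ^ 2)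
    (ha : 0 ≤ a) (hb : 0 ≤ b) (hsum : k + a + b ≤ N) (h : l ^ 3 ≤ k * l + 4 * a + 6 * b) :
    N ≤ k ∧ l ^ 2 ≤ N := by
  have hl6 : 6 < l := by nlinarith
  have hk : N ≤ k := by nlinarith
  exact ⟨hk, by nlinarith⟩

theorem sq_le_and_isUniversal_of_le_sq {W : Type*} [Fintype W] [DecidableEq W]
    {G : SimpleGraph W} [DecidableRel G.Adj] {d : ℕ} (f : G ↪g cube d) {x : W → ℝ} {l : ℝ} {w : W}
    (hx₁ : ∀ v, x v ≤ 1) (hxw : x w = 1) (heig : ∀ v, ∑ u ∈ G.neighborFinset v, x u = l * x v)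
    (hl₀ : 0 ≤ l) (hW : 36 < (Fintype.card W : ℝ) - 1) (hl : (Fintype.card W : ℝ) - 1 ≤ l ^ 2) :
    l ^ 2 ≤ Fintype.card W - 1 ∧ G.IsUniversal w := by
  have hcount : (#(cubeLayer f w 1) : ℝ) + #(cubeLayer f w 2) + #(cubeLayer f w 3) ≤
      Fintype.card W - 1 := by
    rw [le_sub_iff_add_le]
    exact_mod_cast card_cubeLayer_one_add_two_add_three_lt (f := f) w
  obtain ⟨hk, hsq⟩ := le_of_pow_three_le_of_le_sq hW hl₀ hl (Nat.cast_nonneg _)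
    (Nat.cast_nonneg _) hcount (pow_three_le_of_cube_embedding (f := f) hx₁ hxw heig)
  refine ⟨hsq, (G.degree_eq_card_sub_one w).1 ?_⟩
  have : (Fintype.card W : ℝ) ≤ #(cubeLayer f w 1) + 1 := by linarith
  have : Fintype.card W ≤ #(cubeLayer f w 1) + 1 := by exact_mod_cast this
  have := G.degree_lt_card_verts w
  rw [← card_neighborFinset_eq_degree, neighborFinset_eq_cubeLayer_one (f := f)] at this ⊢
  omega

theorem star_is_best_general (d n : ℕ) (U : Finset (Finset (Fin d)))
    (hcard : U.card = n) (hn : 103 ≤ n) :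
    lam1 ((cube d).induce (↑U : Set (Finset (Fin d)))) ≤ Real.sqrt ((n : ℝ) - 1) ∧
    (lam1 ((cube d).induce (↑U : Set (Finset (Fin d)))) = Real.sqrt ((n : ℝ) - 1) ↔
      ∃ c : ↥(↑U : Set (Finset (Fin d))), ∀ a b : ↥(↑U : Set (Finset (Fin d))),
        ((cube d).induce (↑U : Set (Finset (Fin d)))).Adj a b ↔
          ((a = c ∧ b ≠ c) ∨ (b = c ∧ a ≠ c))) := by
  set G := (cube d).induce (↑U : Set (Finset (Fin d)))
  have hV : Fintype.card ↥(↑U : Set (Finset (Fin d))) = n := by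
    rw [← hcard]; exact Fintype.card_coe U
  have : Nonempty ↥(↑U : Set (Finset (Fin d))) := Fintype.card_pos_iff.1 (by omega)
  have h36 : 36 < (n : ℝ) - 1 := by
    have : (103 : ℝ) ≤ n := by exact_mod_cast hn
    linarith
  have hl₀ := lam1_nonneg G
  obtain ⟨x, w, -, hx₁, hxw, heig⟩ := exists_perron_vector G
  have hstar := sq_le_and_isUniversal_of_le_sq (Embedding.induce _) hx₁ hxw heig hl₀
  rw [hV] at hstar
  have hsq : lam1 G ^ 2 ≤ n - 1 := by
    by_contra h
    exact h (hstar h36 (not_le.1 h).le).1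
  have hsqrt : lam1 G ≤ √((n : ℝ) - 1) := (Real.le_sqrt hl₀ (by linarith)).2 hsq
  refine ⟨hsqrt, fun heq => ⟨w, ?_⟩, ?_⟩
  · refine adj_iff_of_isUniversal (Embedding.induce _) (hstar h36 ?_).2
    rw [heq, Real.sq_sqrt (by linarith)]
  · rintro ⟨c, hc⟩
    refine le_antisymm hsqrt ?_
    rw [← hV]
    exact sqrt_card_sub_one_le_lam1_of_star G hc

theorem star_is_best (d n : ℕ) (U : Finset (Finset (Fin d)))
    (hcard : U.card = n) (hnd : n ≤ d) (hn : 103 ≤ n) :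
    lam1 ((cube d).induce (↑U : Set (Finset (Fin d)))) ≤ Real.sqrt ((n : ℝ) - 1) ∧
    (lam1 ((cube d).induce (↑U : Set (Finset (Fin d)))) = Real.sqrt ((n : ℝ) - 1) ↔
      ∃ c : ↥(↑U : Set (Finset (Fin d))), ∀ a b : ↥(↑U : Set (Finset (Fin d))),
        ((cube d).induce (↑U : Set (Finset (Fin d)))).Adj a b ↔
          ((a = c ∧ b ≠ c) ∨ (b = c ∧ a ≠ c))) :=
  star_is_best_general d n U hcard hn
end

section
/- Let G be a subgraph of the hypercube whose vertex set consists of subsets of [d] each of size at most t, where t ≤ d/2, and suppose the maximum degree of G is at most d. Then λ₁(G) ≤ 2√(t·d). -/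
open SimpleGraph Finset Matrix

/-!
Grade the vertices by cardinality. A vertex `S` on level `k` has at most `d` neighbours on
level `k + 1` and at most `|S| ≤ t` on level `k - 1`, so for the positive weight
`w S = x ^ |S|` the adjacency matrix satisfies `A w ≤ (d x + t / x) w`, and `x = √(t / d)`
turns this into `A w ≤ 2 √(t d) w`. For a nonnegative matrix, such a positive `w` bounds every
eigenvalue (Collatz–Wielandt): compare `A f = μ f` with `A w` at a vertex maximising `|f| / w`.
-/

namespace Matrix

variable {n : Type*} [Fintype n] [DecidableEq n]

theorem abs_le_of_hasEigenvalue_of_mulVec_le {M : Matrix n n ℝ} (hM : ∀ i j, 0 ≤ M i j)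
    {w : n → ℝ} (hw : ∀ i, 0 < w i) {C : ℝ} (hMw : ∀ i, (M *ᵥ w) i ≤ C * w i) {μ : ℝ}
    (hμ : Module.End.HasEigenvalue (toLin' M) μ) : |μ| ≤ C := by
  obtain ⟨f, hf⟩ := hμ.exists_hasEigenvector
  have hMf : M *ᵥ f = μ • f := by simpa [toLin'_apply] using hf.apply_eq_smul
  obtain ⟨i₁, hi₁⟩ : ∃ i, f i ≠ 0 := Function.ne_iff.mp hf.2
  obtain ⟨i₀, -, hmax⟩ := exists_max_image univ (fun i => |f i| / w i) ⟨i₁, mem_univ _⟩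
  set c := |f i₀| / w i₀ with hc_def
  have hf_le : ∀ i, |f i| ≤ c * w i := fun i => (div_le_iff₀ (hw i)).mp (hmax i (mem_univ i))
  have hc : 0 < c := (div_pos (abs_pos.mpr hi₁) (hw i₁)).trans_le (hmax i₁ (mem_univ _))
  have hfi₀ : 0 < |f i₀| := by simpa [hc_def, hw i₀] using hc
  refine le_of_mul_le_mul_right ?_ hfi₀
  calc |μ| * |f i₀| = |(M *ᵥ f) i₀| := by rw [hMf, Pi.smul_apply, smul_eq_mul, abs_mul]
  _ ≤ ∑ j, M i₀ j * |f j| := by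
      simpa only [mulVec, dotProduct, abs_mul, abs_of_nonneg (hM i₀ _)] using
        abs_sum_le_sum_abs (fun j => M i₀ j * f j) univ
  _ ≤ ∑ j, M i₀ j * (c * w j) := by gcongr with j; exacts [hM i₀ j, hf_le j]
  _ = c * (M *ᵥ w) i₀ := by
      simp only [mulVec, dotProduct, mul_sum]
      exact sum_congr rfl fun j _ => by ring
  _ ≤ c * (C * w i₀) := by gcongr; exact hMw i₀
  _ = C * |f i₀| := by
      have := hw i₀
      rw [hc_def]
      field_simp

end Matrix

namespace SimpleGraph

variable {V : Type*} [Fintype V] {G : SimpleGraph V} [DecidableRel G.Adj] {r : V → ℕ}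
  {a b : ℕ}

structure IsGraded (G : SimpleGraph V) [DecidableRel G.Adj] (r : V → ℕ) (a b : ℕ) : Prop where
  rank_adj : ∀ ⦃u v⦄, G.Adj u v → r u = r v + 1 ∨ r v = r u + 1
  card_up_le : ∀ v, #{u ∈ G.neighborFinset v | r u = r v + 1} ≤ a
  card_down_le : ∀ v, #{u ∈ G.neighborFinset v | r v = r u + 1} ≤ b

namespace IsGraded

theorem pos_of_adj (hG : G.IsGraded r a b) {u v : V} (huv : G.Adj u v) : 0 < a ∧ 0 < b := by
  wlog hrv : r v = r u + 1 generalizing u v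
  · exact this huv.symm ((hG.rank_adj huv).resolve_right hrv)
  have hv : v ∈ ({w ∈ G.neighborFinset u | r w = r u + 1} : Finset V) := by simp [huv, hrv]
  have hu : u ∈ ({w ∈ G.neighborFinset v | r v = r w + 1} : Finset V) := by
    simp [huv.symm, hrv]
  exact ⟨(card_pos.mpr ⟨v, hv⟩).trans_le (hG.card_up_le u),
    (card_pos.mpr ⟨u, hu⟩).trans_le (hG.card_down_le v)⟩

theorem adjMatrix_mulVec_pow_le (hG : G.IsGraded r a b) {x : ℝ} (hx : 0 < x) (v : V) :
    (G.adjMatrix ℝ *ᵥ fun u => x ^ r u) v ≤ (a * x + b / x) * x ^ r v := by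
  set N := G.neighborFinset v
  have hsplit : {u ∈ N | ¬ r u = r v + 1} = {u ∈ N | r v = r u + 1} :=
    filter_congr fun u hu => by have := hG.rank_adj ((G.mem_neighborFinset v u).1 hu); omega
  have hup_sum : ∑ u ∈ N with r u = r v + 1, x ^ r u
      = #{u ∈ N | r u = r v + 1} * (x * x ^ r v) := by
    rw [sum_congr rfl fun u hu => by rw [(mem_filter.1 hu).2, pow_succ'], sum_const, nsmul_eq_mul]
  have hdown_sum : ∑ u ∈ N with r v = r u + 1, x ^ r u
      = #{u ∈ N | r v = r u + 1} * (x ^ r v / x) := by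
    refine (sum_congr rfl fun u hu => ?_).trans (sum_const _ |>.trans (nsmul_eq_mul _ _))
    rw [(mem_filter.1 hu).2, pow_succ, mul_div_cancel_right₀ _ hx.ne']
  rw [adjMatrix_mulVec_apply, ← sum_filter_add_sum_filter_not N (fun u => r u = r v + 1),
    hsplit, hup_sum, hdown_sum]
  calc _ ≤ (a : ℝ) * (x * x ^ r v) + b * (x ^ r v / x) := by
        gcongr; exacts [mod_cast hG.card_up_le v, mod_cast hG.card_down_le v]
  _ = _ := by ring

theorem le_two_sqrt_of_hasEigenvalue [DecidableEq V] (hG : G.IsGraded r a b) {μ : ℝ}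
    (hμ : Module.End.HasEigenvalue (toLin' (G.adjMatrix ℝ)) μ) : μ ≤ 2 * √(a * b) := by
  have hA : ∀ i j, (0 : ℝ) ≤ G.adjMatrix ℝ i j := fun i j => by
    rw [adjMatrix_apply]; split_ifs <;> norm_num
  refine (le_abs_self μ).trans ?_
  by_cases hab : 0 < a ∧ 0 < b
  · obtain ⟨ha, hb⟩ : (0 : ℝ) < a ∧ (0 : ℝ) < b := ⟨mod_cast hab.1, mod_cast hab.2⟩
    -- `x = √(b / a)` balances the two terms of `a x + b / x`.
    have hx : 0 < √b / √a := by positivity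
    have hbal : a * (√b / √a) + b / (√b / √a) = 2 * √(a * b) := by
      have := Real.sqrt_pos.2 ha
      have := Real.sqrt_pos.2 hb
      rw [Real.sqrt_mul ha.le]
      field_simp
      rw [Real.sq_sqrt ha.le, Real.sq_sqrt hb.le]
      ring
    refine Matrix.abs_le_of_hasEigenvalue_of_mulVec_le hA (fun v => pow_pos hx (r v))
      (fun v => ?_) hμ
    rw [← hbal]
    exact hG.adjMatrix_mulVec_pow_le hx v
  · have hzero : G.adjMatrix ℝ = 0 := by
      ext u v
      rw [adjMatrix_apply, if_neg fun huv => hab (hG.pos_of_adj huv)]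
      rfl
    refine Matrix.abs_le_of_hasEigenvalue_of_mulVec_le hA (w := 1) (fun _ => one_pos)
      (fun v => ?_) hμ
    rw [hzero, zero_mulVec, Pi.zero_apply, Pi.one_apply, mul_one]
    positivity

end IsGraded

end SimpleGraph

theorem Finset.eq_erase_or_eq_insert_of_card_symmDiff_eq_one {α : Type*} [DecidableEq α]
    {S T : Finset α} (h : #(symmDiff S T) = 1) :
    (∃ a ∈ S, T = S.erase a) ∨ ∃ a ∉ S, T = insert a S := by
  obtain ⟨a, ha⟩ := card_eq_one.mp h
  have hT : T = symmDiff S {a} := by rw [← ha, symmDiff_symmDiff_cancel_left]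
  by_cases haS : a ∈ S
  · exact .inl ⟨a, haS, by rw [hT]; ext; simp [mem_symmDiff]; grind⟩
  · exact .inr ⟨a, haS, by rw [hT]; ext; simp [mem_symmDiff]; grind⟩

theorem cube_card_eq_succ_or_of_adj {D : ℕ} {S T : Finset (Fin D)} (h : (cube D).Adj S T) :
    #S = #T + 1 ∨ #T = #S + 1 := by
  rcases Finset.eq_erase_or_eq_insert_of_card_symmDiff_eq_one h with
    ⟨a, ha, rfl⟩ | ⟨a, ha, rfl⟩
  · exact .inl (card_erase_add_one ha).symm
  · exact .inr (card_insert_of_notMem ha)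

theorem card_cube_induce_lower_neighbors_le {D : ℕ} (s : Set (Finset (Fin D))) [Fintype s]
    (v : s) :
    #((((cube D).induce s).neighborFinset v).filter
      fun u : s => #(v : Finset (Fin D)) = #(u : Finset (Fin D)) + 1) ≤ #(v : Finset (Fin D)) := by
  refine (card_le_card_of_injOn (t := (v : Finset (Fin D)).image (v : Finset (Fin D)).erase)
    Subtype.val (fun u hu => ?_) Subtype.val_injective.injOn).trans card_image_le
  obtain ⟨hadj, hcard⟩ := mem_filter.mp hu
  have hadj : (cube D).Adj v u := (mem_neighborFinset ((cube D).induce s) v u).mp hadj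
  rcases Finset.eq_erase_or_eq_insert_of_card_symmDiff_eq_one hadj with
    ⟨a, ha, hu⟩ | ⟨a, ha, hu⟩
  · exact mem_image.mpr ⟨a, ha, hu.symm⟩
  · rw [hu, card_insert_of_notMem ha] at hcard
    omega

theorem cube_induce_isGraded {D d t : ℕ} (s : Set (Finset (Fin D))) [Fintype s]
    (hs : ∀ S ∈ s, #S ≤ t) (hdeg : ∀ v, ((cube D).induce s).degree v ≤ d) :
    ((cube D).induce s).IsGraded (fun v => #(v : Finset (Fin D))) d t where
  rank_adj _ _ := cube_card_eq_succ_or_of_adj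
  card_up_le v := (card_filter_le _ _).trans (hdeg v)
  card_down_le v := (card_cube_induce_lower_neighbors_le s v).trans (hs _ v.2)

theorem level_bound_eigenvalue_general (D d t : ℕ)
    (U : Finset (Finset (Fin D))) (hU : ∀ S ∈ U, S.card ≤ t)
    (hdeg : ∀ a : ↥(↑U : Set (Finset (Fin D))),
      ((cube D).induce (↑U : Set (Finset (Fin D)))).degree a ≤ d) :
    lam1 ((cube D).induce (↑U : Set (Finset (Fin D)))) ≤
      2 * Real.sqrt ((t : ℝ) * (d : ℝ)) := by
  refine Real.sSup_le (fun μ hμ => ?_) (by positivity)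
  rw [mul_comm (t : ℝ)]
  exact (cube_induce_isGraded _ hU hdeg).le_two_sqrt_of_hasEigenvalue (μ := μ) hμ

theorem level_bound_eigenvalue (D d t : ℕ) (ht : 2 * t ≤ d)
    (U : Finset (Finset (Fin D))) (hU : ∀ S ∈ U, S.card ≤ t)
    (hdeg : ∀ a : ↥(↑U : Set (Finset (Fin D))),
      ((cube D).induce (↑U : Set (Finset (Fin D)))).degree a ≤ d) :
    lam1 ((cube D).induce (↑U : Set (Finset (Fin D)))) ≤
      2 * Real.sqrt ((t : ℝ) * (d : ℝ)) :=
  level_bound_eigenvalue_general D d t U hU hdeg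
end
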